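/- arXiv:1805.09269 — 2 statements merged into one kernel-verified Lean document; each statement's English description precedes it below -/
import Mathlib

section
/- Assume Hypothesis I with Hölder exponent κ > 1/2 for ψ, and let η : I → ℝ^d be continuous with finite p-variation for every p > 2. Then for every feasible process (x,u) with respect to ξ, the function t ↦ ψ(t, x(t)) has finite (1/κ)-variation (note 1/κ < 2), and the Young integral ∫_I ψ(t, x(t)) dη(t) exists and is finite. -/
open Set MeasureTheory Filter
open scoped ENNReal NNReal Topology

noncomputable section
attribute [local instance] Classical.propDecidable

/-- The `p`-variation of a path over `[a, b]` (as an extended nonnegative real):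
`Var_p(x) = (sup_D ∑ |x(t_{i+1}) - x(t_i)|^p)^(1/p)` over finite dissections
`a = t_0 ≤ t_1 ≤ … ≤ t_n = b`. -/
noncomputable def pVar {V : Type*} [NormedAddCommGroup V] (p a b : ℝ) (x : ℝ → V) : ℝ≥0∞ :=
  (⨆ (n : ℕ) (t : Fin (n + 1) → ℝ)
      (_ : Monotone t ∧ t 0 = a ∧ t (Fin.last n) = b),
    ∑ i : Fin n, (‖x (t i.succ) - x (t i.castSucc)‖₊ : ℝ≥0∞) ^ p) ^ (1 / p)

/-- `HasYoungIntegral a b x y I`: the Riemann sums `∑ x(τᵢ)(y(t_{i+1}) - y(tᵢ))` over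
dissections `a = t₀ ≤ … ≤ t_n = b` with tags `τᵢ ∈ [tᵢ, t_{i+1}]` converge to `I`
as the mesh tends to `0`, independently of the dissections and the tags. -/
def HasYoungIntegral {V W : Type*} [NormedAddCommGroup V] [NormedSpace ℝ V]
    [NormedAddCommGroup W] [NormedSpace ℝ W]
    (a b : ℝ) (x : ℝ → (V →L[ℝ] W)) (y : ℝ → V) (I : W) : Prop :=
  ∀ ε > (0 : ℝ), ∃ δ > (0 : ℝ), ∀ (n : ℕ) (t : Fin (n + 1) → ℝ) (τ : Fin n → ℝ),
    Monotone t → t 0 = a → t (Fin.last n) = b →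
    (∀ i : Fin n, τ i ∈ Set.Icc (t i.castSucc) (t i.succ)) →
    (∀ i : Fin n, t i.succ - t i.castSucc < δ) →
    ‖(∑ i : Fin n, x (τ i) (y (t i.succ) - y (t i.castSucc))) - I‖ < ε

/-- The Young integral, when it exists (junk value `0` otherwise). -/
noncomputable def youngIntegral {V W : Type*} [NormedAddCommGroup V] [NormedSpace ℝ V]
    [NormedAddCommGroup W] [NormedSpace ℝ W]
    (a b : ℝ) (x : ℝ → (V →L[ℝ] W)) (y : ℝ → V) : W :=
  if h : ∃ I, HasYoungIntegral a b x y I then h.choose else 0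

/-- The `L^r` norm of a function on `[0, T]`. -/
noncomputable def LrNorm {E : Type*} [NormedAddCommGroup E] (r T : ℝ) (u : ℝ → E) : ℝ :=
  (∫ s in Set.Icc (0 : ℝ) T, ‖u s‖ ^ r) ^ (1 / r)

/-- The control class `𝒰_r`: measurable, `U`-valued a.e., with `‖u‖_r < ∞`. -/
def MemUr {E : Type*} [NormedAddCommGroup E] (r T : ℝ) (U : Set E) (u : ℝ → E) : Prop :=
  AEStronglyMeasurable u (volume.restrict (Set.Icc (0 : ℝ) T)) ∧
  (∀ᵐ t ∂(volume.restrict (Set.Icc (0 : ℝ) T)), u t ∈ U) ∧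
  IntegrableOn (fun s => ‖u s‖ ^ r) (Set.Icc (0 : ℝ) T)

/-- `(x, u)` is a process w.r.t. `ξ` on `[0, T]`: `u` measurable, `x` absolutely
continuous with `x(0) = ξ` and `ẋ = f(t,x) + g(t,x)u` a.e. (integral form). -/
def IsProcessOn {E : Type*} [NormedAddCommGroup E] [NormedSpace ℝ E]
    (T : ℝ) (f : ℝ → E → E) (g : ℝ → E → (E →L[ℝ] E)) (ξ : E) (x u : ℝ → E) : Prop :=
  AEStronglyMeasurable u (volume.restrict (Set.Icc (0 : ℝ) T)) ∧
  IntegrableOn (fun s => f s (x s) + (g s (x s)) (u s)) (Set.Icc (0 : ℝ) T) ∧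
  ∀ t ∈ Set.Icc (0 : ℝ) T, x t = ξ + ∫ s in (0 : ℝ)..t, (f s (x s) + (g s (x s)) (u s))

/-- Feasible process: a process whose control takes values in `U` a.e. -/
def IsFeasible {E : Type*} [NormedAddCommGroup E] [NormedSpace ℝ E]
    (T : ℝ) (f : ℝ → E → E) (g : ℝ → E → (E →L[ℝ] E)) (U : Set E)
    (ξ : E) (x u : ℝ → E) : Prop :=
  IsProcessOn T f g ξ x u ∧ ∀ᵐ t ∂(volume.restrict (Set.Icc (0 : ℝ) T)), u t ∈ U

/-- Admissible process: feasible with finite (integrable) deterministic costs. -/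
def IsAdmissible {E : Type*} [NormedAddCommGroup E] [NormedSpace ℝ E]
    (T : ℝ) (f : ℝ → E → E) (g : ℝ → E → (E →L[ℝ] E)) (U : Set E)
    (φ : ℝ → E → E → ℝ) (ξ : E) (x u : ℝ → E) : Prop :=
  IsFeasible T f g U ξ x u ∧
  IntegrableOn (fun t => φ t (x t) (u t)) (Set.Icc (0 : ℝ) T)

/-- The cost functional `A(x,u) = ∫ φ(t,x,u) dt + ∫ ψ(t,x) dη` (Young integral). -/
noncomputable def costA (d : ℕ) {E : Type*} [NormedAddCommGroup E] [NormedSpace ℝ E]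
    (T : ℝ) (φ : ℝ → E → E → ℝ)
    (ψ : ℝ → E → (EuclideanSpace ℝ (Fin d) →L[ℝ] ℝ)) (η : ℝ → EuclideanSpace ℝ (Fin d))
    (x u : ℝ → E) : ℝ :=
  (∫ t in Set.Icc (0 : ℝ) T, φ t (x t) (u t)) + youngIntegral 0 T (fun t => ψ t (x t)) η

/-- Hypothesis I(v): the nonlinearity and energy estimates for local solutions
with initial condition `ξ`. -/
structure HypothesisV {E : Type*} [NormedAddCommGroup E] [NormedSpace ℝ E]
    (T : ℝ) (f : ℝ → E → E) (g : ℝ → E → (E →L[ℝ] E)) (U : Set E)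
    (r Cs Ce β γ : ℝ) (ξ : E) : Prop where
  state_bound : ∀ u : ℝ → E, MemUr r T U u → ∀ T₁ ∈ Set.Ioc (0 : ℝ) T, ∀ x : ℝ → E,
    IsProcessOn T₁ f g ξ x u →
    (∫ s in Set.Icc (0 : ℝ) T₁, ‖f s (x s) + (g s (x s)) (u s)‖ ^ r) ^ (1 / r)
      ≤ Cs * (1 + LrNorm r T u ^ β)
  energy_bound : ∀ u : ℝ → E, MemUr r T U u → ∀ T₁ ∈ Set.Ioc (0 : ℝ) T, ∀ x : ℝ → E,
    IsProcessOn T₁ f g ξ x u → ∀ t ∈ Set.Icc (0 : ℝ) T₁,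
      ‖x t‖ ≤ Ce * (1 + LrNorm r T u ^ γ)

/-- Hypothesis I of the paper. -/
structure HypothesisI (d : ℕ) {E : Type*} [NormedAddCommGroup E] [NormedSpace ℝ E]
    (T : ℝ) (f : ℝ → E → E) (g : ℝ → E → (E →L[ℝ] E)) (U : Set E)
    (φ : ℝ → E → E → ℝ) (ψ : ℝ → E → (EuclideanSpace ℝ (Fin d) →L[ℝ] ℝ))
    (ξ : E) (r κ Cψ α Cφ δ Cs Ce β γ : ℝ) (K : ℝ → ℝ) : Prop where
  hT : 0 < T
  hr : 1 < r
  hκ : 1 / 2 < κ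
  hCψ : 0 ≤ Cψ
  hα : 0 ≤ α
  hCφ : 0 < Cφ
  hδ : 0 < δ
  hCs : 0 ≤ Cs
  hCe : 0 ≤ Ce
  hβ : 0 ≤ β
  hγ : 0 ≤ γ
  f_cont : ContinuousOn (fun p : ℝ × E => f p.1 p.2) (Set.Icc 0 T ×ˢ Set.univ)
  g_cont : ContinuousOn (fun p : ℝ × E => g p.1 p.2) (Set.Icc 0 T ×ˢ Set.univ)
  ψ_holder : ∀ R ≥ (0 : ℝ), ∀ s ∈ Set.Icc (0 : ℝ) T, ∀ t ∈ Set.Icc (0 : ℝ) T,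
    ∀ y z : E, ‖y‖ ≤ R → ‖z‖ ≤ R → ‖ψ t z - ψ s y‖ ≤ K R * (|t - s| + ‖z - y‖) ^ κ
  K_growth : ∀ R ≥ (0 : ℝ), K R ≤ Cψ * (1 + R ^ α)
  U_closed : IsClosed U
  U_convex : Convex ℝ U
  φ_cont : ContinuousOn (fun p : ℝ × E × E => φ p.1 p.2.1 p.2.2)
    (Set.Icc 0 T ×ˢ Set.univ ×ˢ U)
  φ_convex : ∀ t ∈ Set.Icc (0 : ℝ) T, ∀ z : E, ConvexOn ℝ U (fun v => φ t z v)
  φ_lower : ∀ t ∈ Set.Icc (0 : ℝ) T, ∀ z : E, ∀ v ∈ U,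
    Cφ * (‖v‖ ^ r - ‖z‖ ^ δ) ≤ φ t z v
  bounds : HypothesisV T f g U r Cs Ce β γ ξ
  exponent1 : γ * (α + κ - 1 / 2) + β / 2 < r
  exponent2 : γ * δ < r

/-- Hypothesis II of the paper (Hypothesis I plus differentiability assumptions),
with explicit partial derivatives `Df, Dg, Dφ, Dψ` with respect to the state. -/
structure HypothesisII (d : ℕ) {E : Type*} [NormedAddCommGroup E] [NormedSpace ℝ E]
    (T : ℝ) (f : ℝ → E → E) (g : ℝ → E → (E →L[ℝ] E)) (U : Set E)
    (φ : ℝ → E → E → ℝ) (ψ : ℝ → E → (EuclideanSpace ℝ (Fin d) →L[ℝ] ℝ))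
    (ξ : E) (r κ Cψ α Cφ δ Cs Ce β γ : ℝ) (K : ℝ → ℝ)
    (Df : ℝ → E → (E →L[ℝ] E)) (Dg : ℝ → E → (E →L[ℝ] (E →L[ℝ] E)))
    (Dφ : ℝ → E → E → (E →L[ℝ] ℝ))
    (Dψ : ℝ → E → (E →L[ℝ] (EuclideanSpace ℝ (Fin d) →L[ℝ] ℝ)))
    (R c : ℝ) (dfun : ℝ → ℝ)
    extends HypothesisI d T f g U φ ψ ξ r κ Cψ α Cφ δ Cs Ce β γ K : Prop where
  hDf : ∀ t ∈ Set.Icc (0 : ℝ) T, ∀ z : E, HasFDerivAt (f t) (Df t z) z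
  Df_cont : ContinuousOn (fun p : ℝ × E => Df p.1 p.2) (Set.Icc 0 T ×ˢ Set.univ)
  hDg : ∀ t ∈ Set.Icc (0 : ℝ) T, ∀ z : E, HasFDerivAt (g t) (Dg t z) z
  Dg_cont : ContinuousOn (fun p : ℝ × E => Dg p.1 p.2) (Set.Icc 0 T ×ˢ Set.univ)
  hDφ : ∀ t ∈ Set.Icc (0 : ℝ) T, ∀ z : E, ∀ v ∈ U,
    HasFDerivAt (fun z' => φ t z' v) (Dφ t z v) z
  Dφ_cont : ContinuousOn (fun p : ℝ × E × E => Dφ p.1 p.2.1 p.2.2)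
    (Set.Icc 0 T ×ˢ Set.univ ×ˢ U)
  hR : 0 < R
  hc : 0 ≤ c
  hd_int : IntegrableOn dfun (Set.Icc (0 : ℝ) T)
  hd_nonneg : ∀ t, 0 ≤ dfun t
  Dφ_growth : ∀ x u : ℝ → E, IsAdmissible T f g U φ ξ x u →
    ∀ᵐ t ∂(volume.restrict (Set.Icc (0 : ℝ) T)), ∀ y : E, ‖y - x t‖ ≤ R →
      ‖Dφ t y (u t)‖ ≤ c * |φ t y (u t)| + dfun t
  hDψ : ∀ t ∈ Set.Icc (0 : ℝ) T, ∀ z : E, HasFDerivAt (fun z' => ψ t z') (Dψ t z) z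
  Dψ_holder : ∃ κ' > (1 / 2 : ℝ), ∀ R' ≥ (0 : ℝ), ∃ K' : ℝ,
    ∀ s ∈ Set.Icc (0 : ℝ) T, ∀ t ∈ Set.Icc (0 : ℝ) T, ∀ y z : E, ‖y‖ ≤ R' → ‖z‖ ≤ R' →
      ‖Dψ t z - Dψ s y‖ ≤ K' * (|t - s| + ‖z - y‖) ^ κ'

/-- The Hamiltonian `H(t, z, μ, v) = φ(t,z,v) + μ(f(t,z) + g(t,z)v)`. -/
noncomputable def Ham {E : Type*} [NormedAddCommGroup E] [NormedSpace ℝ E]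
    (f : ℝ → E → E) (g : ℝ → E → (E →L[ℝ] E)) (φ : ℝ → E → E → ℝ)
    (t : ℝ) (z : E) (μ : E →L[ℝ] ℝ) (v : E) : ℝ :=
  φ t z v + μ (f t z + (g t z) v)

/-- `lam` solves the costate equation along the process `(x, u)`. -/
def IsCostate (d : ℕ) {E : Type*} [NormedAddCommGroup E] [NormedSpace ℝ E]
    (T : ℝ)
    (Df : ℝ → E → (E →L[ℝ] E)) (Dg : ℝ → E → (E →L[ℝ] (E →L[ℝ] E)))
    (Dφ : ℝ → E → E → (E →L[ℝ] ℝ))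
    (Dψ : ℝ → E → (E →L[ℝ] (EuclideanSpace ℝ (Fin d) →L[ℝ] ℝ)))
    (η : ℝ → EuclideanSpace ℝ (Fin d)) (x u : ℝ → E) (lam : ℝ → (E →L[ℝ] ℝ)) : Prop :=
  ContinuousOn lam (Set.Icc 0 T) ∧
  ∀ t ∈ Set.Icc (0 : ℝ) T,
    lam t = (∫ s in t..T, ((lam s).comp (Df s (x s) + (Dg s (x s)).flip (u s))
        + Dφ s (x s) (u s)))
      + youngIntegral t T (fun s => (Dψ s (x s)).flip) η

/-- `(x, u)` is a global minimiser of the cost over admissible processes w.r.t. `ξ`. -/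
def IsOptimal (d : ℕ) {E : Type*} [NormedAddCommGroup E] [NormedSpace ℝ E]
    (T : ℝ) (f : ℝ → E → E) (g : ℝ → E → (E →L[ℝ] E)) (U : Set E)
    (φ : ℝ → E → E → ℝ) (ψ : ℝ → E → (EuclideanSpace ℝ (Fin d) →L[ℝ] ℝ))
    (η : ℝ → EuclideanSpace ℝ (Fin d)) (ξ : E) (x u : ℝ → E) : Prop :=
  IsAdmissible T f g U φ ξ x u ∧
  ∀ x' u' : ℝ → E, IsAdmissible T f g U φ ξ x' u' →
    costA d T φ ψ η x u ≤ costA d T φ ψ η x' u'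

/-- Optimal triple: optimal process together with its costate. -/
def IsOptimalTriple (d : ℕ) {E : Type*} [NormedAddCommGroup E] [NormedSpace ℝ E]
    (T : ℝ) (f : ℝ → E → E) (g : ℝ → E → (E →L[ℝ] E)) (U : Set E)
    (φ : ℝ → E → E → ℝ) (ψ : ℝ → E → (EuclideanSpace ℝ (Fin d) →L[ℝ] ℝ))
    (η : ℝ → EuclideanSpace ℝ (Fin d)) (ξ : E) (r : ℝ)
    (Df : ℝ → E → (E →L[ℝ] E)) (Dg : ℝ → E → (E →L[ℝ] (E →L[ℝ] E)))
    (Dφ : ℝ → E → E → (E →L[ℝ] ℝ))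
    (Dψ : ℝ → E → (E →L[ℝ] (EuclideanSpace ℝ (Fin d) →L[ℝ] ℝ)))
    (x u : ℝ → E) (lam : ℝ → (E →L[ℝ] ℝ)) : Prop :=
  MemUr r T U u ∧ IsOptimal d T f g U φ ψ η ξ x u ∧
  IsCostate d T Df Dg Dφ Dψ η x u lam

/-- `υ` is the (unique) pointwise minimiser of the Hamiltonian over `U`. -/
def IsArgmin {E : Type*} [NormedAddCommGroup E] [NormedSpace ℝ E]
    (T : ℝ) (f : ℝ → E → E) (g : ℝ → E → (E →L[ℝ] E)) (U : Set E)
    (φ : ℝ → E → E → ℝ) (υ : ℝ → E → (E →L[ℝ] ℝ) → E) : Prop :=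
  ∀ t ∈ Set.Icc (0 : ℝ) T, ∀ z : E, ∀ μ : E →L[ℝ] ℝ,
    υ t z μ ∈ U ∧ (∀ v ∈ U, Ham f g φ t z μ (υ t z μ) ≤ Ham f g φ t z μ v) ∧
    (∀ v ∈ U, (∀ w ∈ U, Ham f g φ t z μ v ≤ Ham f g φ t z μ w) → v = υ t z μ)

/-- `(x, lam)` solves the Hamiltonian system with initial condition `x 0 = ξ`. -/
def SolvesHamiltonian (d : ℕ) {E : Type*} [NormedAddCommGroup E] [NormedSpace ℝ E]
    (T : ℝ) (f : ℝ → E → E) (g : ℝ → E → (E →L[ℝ] E))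
    (Df : ℝ → E → (E →L[ℝ] E)) (Dg : ℝ → E → (E →L[ℝ] (E →L[ℝ] E)))
    (Dφ : ℝ → E → E → (E →L[ℝ] ℝ))
    (Dψ : ℝ → E → (E →L[ℝ] (EuclideanSpace ℝ (Fin d) →L[ℝ] ℝ)))
    (η : ℝ → EuclideanSpace ℝ (Fin d)) (υ : ℝ → E → (E →L[ℝ] ℝ) → E)
    (ξ : E) (x : ℝ → E) (lam : ℝ → (E →L[ℝ] ℝ)) : Prop :=
  ContinuousOn x (Set.Icc 0 T) ∧ ContinuousOn lam (Set.Icc 0 T) ∧ x 0 = ξ ∧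
  (∀ t ∈ Set.Icc (0 : ℝ) T,
    x t = ξ + ∫ s in (0 : ℝ)..t, (f s (x s) + (g s (x s)) (υ s (x s) (lam s)))) ∧
  (∀ t ∈ Set.Icc (0 : ℝ) T,
    lam t = (∫ s in t..T, (Dφ s (x s) (υ s (x s) (lam s))
        + (lam s).comp (Df s (x s) + (Dg s (x s)).flip (υ s (x s) (lam s)))))
      + youngIntegral t T (fun s => (Dψ s (x s)).flip) η)

/-- The cost `J(ξ, u)` of the (unique, under Hypothesis II) trajectory started at `ξ`
with control `u`; junk value `0` if no admissible trajectory exists. -/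
noncomputable def Jcost (d : ℕ) {E : Type*} [NormedAddCommGroup E] [NormedSpace ℝ E]
    (T : ℝ) (f : ℝ → E → E) (g : ℝ → E → (E →L[ℝ] E))
    (φ : ℝ → E → E → ℝ) (ψ : ℝ → E → (EuclideanSpace ℝ (Fin d) →L[ℝ] ℝ))
    (η : ℝ → EuclideanSpace ℝ (Fin d)) (ξ : E) (u : ℝ → E) : ℝ :=
  if h : ∃ x : ℝ → E, IsProcessOn T f g ξ x u ∧
      IntegrableOn (fun t => φ t (x t) (u t)) (Set.Icc (0 : ℝ) T)
  then costA d T φ ψ η h.choose u else 0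

/-- The value function `V(ξ) = inf_{u ∈ 𝒰_r} J(ξ, u)` (as an infimum of achieved
finite costs of admissible processes). -/
noncomputable def valueV (d : ℕ) {E : Type*} [NormedAddCommGroup E] [NormedSpace ℝ E]
    (T : ℝ) (f : ℝ → E → E) (g : ℝ → E → (E →L[ℝ] E)) (U : Set E)
    (φ : ℝ → E → E → ℝ) (ψ : ℝ → E → (EuclideanSpace ℝ (Fin d) →L[ℝ] ℝ))
    (η : ℝ → EuclideanSpace ℝ (Fin d)) (r : ℝ) (ξ : E) : ℝ :=
  sInf {a : ℝ | ∃ x u : ℝ → E, MemUr r T U u ∧ IsAdmissible T f g U φ ξ x u ∧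
    a = costA d T φ ψ η x u}

end

/-!
Along a process, `x` is absolutely continuous, so `|t - s| + ‖x t - x s‖ ≤ H t - H s` for the
clock `H t = t + ∫₀ᵗ ‖ẋ‖`. As `x` stays in a ball, the Hölder bound on `ψ` gives
`‖ψ(t, x t) - ψ(s, x s)‖ ≤ C (H t - H s) ^ κ`, and summing `C ^ (1/κ) (H t - H s)` over a
dissection telescopes: `t ↦ ψ(t, x t)` has finite `1/κ`-variation.

Since `κ > 1/2`, there is `p > 2` with `κ + 1/p > 1`, and Young's theorem applies. It rests on
the sewing (Young–Loève) estimate `‖∑ Ξ(tᵢ, tᵢ₊₁) - Ξ(t₀, tₙ)‖ ≤ C ω(t₀, tₙ) ^ θ` for the germ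
`Ξ(s, t) = X s (Y t - Y s)` and a superadditive control `ω` built from the variations of `X`
and `Y`: the Riemann sums of two fine partitions both differ little from the Riemann sum of a
common refinement.
-/

section RealPow

theorem exists_pos_mul_rpow_lt (C : ℝ) {e ε : ℝ} (he : 0 < e) (hε : 0 < ε) :
    ∃ ρ > 0, C * ρ ^ e < ε := by
  have h : Tendsto (fun ρ : ℝ => C * ρ ^ e) (𝓝[>] 0) (𝓝 0) := by
    simpa [Real.zero_rpow he.ne'] using
      ((Real.continuousAt_rpow_const 0 e (Or.inr he.le)).tendsto.const_mul C).mono_left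
        nhdsWithin_le_nhds
  obtain ⟨ρ, hρ, hρ0⟩ := ((h.eventually (gt_mem_nhds hε)).and self_mem_nhdsWithin).exists
  exact ⟨ρ, hρ0, hρ⟩

theorem rpow_le_rpow_sub_mul {x ρ p q : ℝ} (hx : 0 ≤ x) (hxρ : x ≤ ρ) (hq : 0 ≤ q) (hqp : q ≤ p) :
    x ^ p ≤ ρ ^ (p - q) * x ^ q := by
  calc x ^ p = x ^ (p - q + q) := by ring_nf
    _ = x ^ (p - q) * x ^ q := Real.rpow_add_of_nonneg hx (by linarith) hq
    _ ≤ ρ ^ (p - q) * x ^ q := by gcongr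

end RealPow

section PartitionSum

variable {M : Type*}

def partitionSum [AddCommMonoid M] (Ξ : ℝ → ℝ → M) (t : ℕ → ℝ) (n : ℕ) : M :=
  ∑ i ∈ Finset.range n, Ξ (t i) (t (i + 1))

variable [AddCommMonoid M] {Ξ : ℝ → ℝ → M} {t c₁ c₂ : ℕ → ℝ} {n n₁ n₂ : ℕ}

@[simp]
theorem partitionSum_zero : partitionSum Ξ t 0 = 0 := rfl

theorem partitionSum_succ : partitionSum Ξ t (n + 1) = partitionSum Ξ t n + Ξ (t n) (t (n + 1)) :=
  Finset.sum_range_succ _ n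

theorem partitionSum_congr {t' : ℕ → ℝ} (h : ∀ i ≤ n, t i = t' i) :
    partitionSum Ξ t n = partitionSum Ξ t' n :=
  Finset.sum_congr rfl fun i hi => by
    rw [Finset.mem_range] at hi
    rw [h i hi.le, h (i + 1) hi]

theorem Fin.sum_eq_partitionSum (s : Fin (n + 1) → ℝ) (h : ∀ i : Fin (n + 1), t i = s i) :
    ∑ i : Fin n, Ξ (s i.castSucc) (s i.succ) = partitionSum Ξ t n := by
  rw [partitionSum, ← Fin.sum_univ_eq_sum_range]
  refine Finset.sum_congr rfl fun i _ => ?_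
  rw [← h i.castSucc, ← h i.succ]
  rfl

def toNatPartition (s : Fin (n + 1) → ℝ) : ℕ → ℝ := fun k => s (Fin.clamp k n)

theorem toNatPartition_val (s : Fin (n + 1) → ℝ) (i : Fin (n + 1)) : toNatPartition s i = s i :=
  congrArg s (Fin.ext (min_eq_left (Nat.lt_succ_iff.mp i.2)))

theorem toNatPartition_zero (s : Fin (n + 1) → ℝ) : toNatPartition s 0 = s 0 :=
  toNatPartition_val s 0

theorem toNatPartition_self (s : Fin (n + 1) → ℝ) : toNatPartition s n = s (Fin.last n) :=
  congrArg s (Fin.clamp_eq_last n n le_rfl)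

theorem Monotone.toNatPartition {s : Fin (n + 1) → ℝ} (hs : Monotone s) :
    Monotone (toNatPartition s) :=
  hs.comp Fin.clamp_monotone

theorem Fin.sum_eq_partitionSum_toNatPartition (s : Fin (n + 1) → ℝ) :
    ∑ i : Fin n, Ξ (s i.castSucc) (s i.succ) = partitionSum Ξ (toNatPartition s) n :=
  Fin.sum_eq_partitionSum s (toNatPartition_val s)

def concatPartition (c₁ c₂ : ℕ → ℝ) (n₁ : ℕ) : ℕ → ℝ :=
  fun k => if k ≤ n₁ then c₁ k else c₂ (k - n₁)

theorem concatPartition_of_le {k : ℕ} (hk : k ≤ n₁) : concatPartition c₁ c₂ n₁ k = c₁ k :=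
  if_pos hk

theorem concatPartition_add (h : c₁ n₁ = c₂ 0) (k : ℕ) :
    concatPartition c₁ c₂ n₁ (n₁ + k) = c₂ k := by
  rcases Nat.eq_zero_or_pos k with rfl | hk
  · rw [Nat.add_zero, concatPartition_of_le le_rfl, h]
  · rw [concatPartition, if_neg (by omega), Nat.add_sub_cancel_left]

theorem Monotone.concatPartition (h₁ : Monotone c₁) (h₂ : Monotone c₂) (h : c₁ n₁ = c₂ 0) :
    Monotone (concatPartition c₁ c₂ n₁) := by
  intro k l hkl
  by_cases hl : l ≤ n₁
  · rw [concatPartition_of_le hl, concatPartition_of_le (hkl.trans hl)]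
    exact h₁ hkl
  obtain ⟨l, rfl⟩ := Nat.exists_eq_add_of_le (not_le.mp hl).le
  rw [concatPartition_add h]
  by_cases hk : k ≤ n₁
  · rw [concatPartition_of_le hk]
    exact (h₁ hk).trans (h ▸ h₂ (Nat.zero_le l))
  · obtain ⟨k, rfl⟩ := Nat.exists_eq_add_of_le (not_le.mp hk).le
    rw [concatPartition_add h]
    exact h₂ (by omega)

theorem partitionSum_concatPartition (h : c₁ n₁ = c₂ 0) :
    partitionSum Ξ (concatPartition c₁ c₂ n₁) (n₁ + n₂) =
      partitionSum Ξ c₁ n₁ + partitionSum Ξ c₂ n₂ := by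
  rw [partitionSum, Finset.sum_range_add]
  congr 1
  · refine Finset.sum_congr rfl fun i hi => ?_
    rw [Finset.mem_range] at hi
    rw [concatPartition_of_le hi.le, concatPartition_of_le hi]
  · refine Finset.sum_congr rfl fun i _ => ?_
    rw [add_assoc n₁ i 1, concatPartition_add h, concatPartition_add h]

end PartitionSum

section Control

structure IsControlOn (ω : ℝ → ℝ → ℝ) (a b : ℝ) : Prop where
  nonneg : ∀ s t, a ≤ s → s ≤ t → t ≤ b → 0 ≤ ω s t
  superadditive : ∀ s u t, a ≤ s → s ≤ u → u ≤ t → t ≤ b → ω s u + ω u t ≤ ω s t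

def SmallOnShortIntervals (ω : ℝ → ℝ → ℝ) (a b : ℝ) : Prop :=
  ∀ ε > 0, ∃ δ > 0, ∀ s t, a ≤ s → s ≤ t → t ≤ b → t - s < δ → ω s t < ε

theorem SmallOnShortIntervals.add {ω ω' : ℝ → ℝ → ℝ} {a b : ℝ} (hω : SmallOnShortIntervals ω a b)
    (hω' : SmallOnShortIntervals ω' a b) :
    SmallOnShortIntervals (fun s t => ω s t + ω' s t) a b := by
  intro ε hε
  obtain ⟨δ, hδ, h⟩ := hω (ε / 2) (half_pos hε)
  obtain ⟨δ', hδ', h'⟩ := hω' (ε / 2) (half_pos hε)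
  refine ⟨min δ δ', lt_min hδ hδ', fun s t hs hst ht hd => ?_⟩
  linarith [h s t hs hst ht (hd.trans_le (min_le_left _ _)),
    h' s t hs hst ht (hd.trans_le (min_le_right _ _))]

namespace IsControlOn

variable {ω ω' : ℝ → ℝ → ℝ} {a b : ℝ} {t : ℕ → ℝ} {n : ℕ}

theorem add (hω : IsControlOn ω a b) (hω' : IsControlOn ω' a b) :
    IsControlOn (fun s t => ω s t + ω' s t) a b where
  nonneg s t hs hst ht := add_nonneg (hω.nonneg s t hs hst ht) (hω'.nonneg s t hs hst ht)
  superadditive s u t hs hsu hut ht := by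
    linarith [hω.superadditive s u t hs hsu hut ht, hω'.superadditive s u t hs hsu hut ht]

variable (hω : IsControlOn ω a b)
include hω

theorem mono {s s' t' t : ℝ} (hs : a ≤ s) (hss' : s ≤ s') (hst' : s' ≤ t') (ht't : t' ≤ t)
    (ht : t ≤ b) : ω s' t' ≤ ω s t := by
  linarith [hω.superadditive s s' t hs hss' (hst'.trans ht't) ht,
    hω.superadditive s' t' t (hs.trans hss') hst' ht't ht,
    hω.nonneg s s' hs hss' ((hst'.trans ht't).trans ht),
    hω.nonneg t' t (hs.trans (hss'.trans hst')) ht't ht]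

theorem partitionSum_le (ht : Monotone t) (h0 : a ≤ t 0) (hn : t n ≤ b) :
    partitionSum ω t n ≤ ω (t 0) (t n) := by
  induction n with
  | zero => exact hω.nonneg _ _ h0 le_rfl hn
  | succ n ih =>
    rw [partitionSum_succ]
    linarith [ih ((ht n.le_succ).trans hn),
      hω.superadditive _ _ _ h0 (ht n.zero_le) (ht n.le_succ) hn]

theorem sum_skip_le (ht : Monotone t) (h0 : a ≤ t 0) {k : ℕ} (hk : t (k + 1) ≤ b) :
    ∑ j ∈ Finset.range k, ω (t j) (t (j + 2)) ≤ ω (t 0) (t k) + ω (t 0) (t (k + 1)) := by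
  induction k with
  | zero =>
    simpa using add_nonneg (hω.nonneg _ _ h0 le_rfl ((ht (by omega)).trans hk))
      (hω.nonneg _ _ h0 (ht (by omega)) hk)
  | succ k ih =>
    rw [Finset.sum_range_succ]
    linarith [ih ((ht (by omega)).trans hk),
      hω.superadditive _ _ _ h0 (ht k.zero_le) (ht (by omega)) hk]

end IsControlOn

end Control

section Sewing

noncomputable def youngLoeveConst (θ : ℝ) : ℝ := ∑' k : ℕ, (2 / ((k : ℝ) + 1)) ^ θ

theorem summable_two_div_rpow {θ : ℝ} (hθ : 1 < θ) :
    Summable fun k : ℕ => (2 / ((k : ℝ) + 1)) ^ θ := by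
  have h := ((summable_nat_add_iff 1).mpr (Real.summable_nat_rpow_inv.mpr hθ)).mul_left (2 ^ θ)
  refine h.congr fun k => ?_
  push_cast
  rw [Real.div_rpow zero_le_two (by positivity), div_eq_mul_inv]

theorem sum_le_youngLoeveConst {θ : ℝ} (hθ : 1 < θ) (m : ℕ) :
    ∑ k ∈ Finset.range m, (2 / ((k : ℝ) + 1)) ^ θ ≤ youngLoeveConst θ :=
  (summable_two_div_rpow hθ).sum_le_tsum _ fun _ _ => by positivity

theorem youngLoeveConst_nonneg (θ : ℝ) : 0 ≤ youngLoeveConst θ :=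
  tsum_nonneg fun _ => by positivity

theorem partitionSum_delete {M : Type*} [AddCommGroup M] (Ξ : ℝ → ℝ → M) (t : ℕ → ℝ) (j k : ℕ) :
    partitionSum Ξ t (j + k + 2) =
      partitionSum Ξ (fun i => t (if i ≤ j then i else i + 1)) (j + k + 1) -
        (Ξ (t j) (t (j + 2)) - Ξ (t j) (t (j + 1)) - Ξ (t (j + 1)) (t (j + 2))) := by
  induction k with
  | zero =>
    have hj : partitionSum Ξ (fun i => t (if i ≤ j then i else i + 1)) j = partitionSum Ξ t j :=
      partitionSum_congr fun i hi => by simp [hi]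
    simp only [Nat.add_zero, partitionSum_succ, hj, le_refl, if_true,
      show ¬ j + 1 ≤ j by omega, if_false]
    abel
  | succ k ih =>
    rw [show j + (k + 1) + 2 = j + k + 2 + 1 by omega, partitionSum_succ, ih,
      show j + (k + 1) + 1 = j + k + 1 + 1 by omega, partitionSum_succ (n := j + k + 1)]
    simp only [show ¬ j + k + 1 ≤ j by omega, show ¬ j + k + 1 + 1 ≤ j by omega, if_false]
    abel

variable {W : Type*} [NormedAddCommGroup W] {Ξ : ℝ → ℝ → W} {ω : ℝ → ℝ → ℝ} {a b K θ : ℝ}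

theorem IsControlOn.exists_skip_le (hω : IsControlOn ω a b) {t : ℕ → ℝ} {m : ℕ} (ht : Monotone t)
    (h0 : a ≤ t 0) (hm : t (m + 2) ≤ b) :
    ∃ j < m + 1, ω (t j) (t (j + 2)) ≤ 2 / ((m : ℝ) + 1) * ω (t 0) (t (m + 2)) := by
  obtain ⟨j, hj, hjω⟩ := Finset.exists_le_of_sum_le (s := Finset.range (m + 1))
    (f := fun j => ω (t j) (t (j + 2))) (g := fun _ => 2 / ((m : ℝ) + 1) * ω (t 0) (t (m + 2)))
    ⟨0, by simp⟩ (by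
      rw [Finset.sum_const, Finset.card_range, nsmul_eq_mul]
      calc ∑ j ∈ Finset.range (m + 1), ω (t j) (t (j + 2))
          ≤ ω (t 0) (t (m + 1)) + ω (t 0) (t (m + 2)) := hω.sum_skip_le ht h0 hm
        _ ≤ 2 * ω (t 0) (t (m + 2)) := by
          linarith [hω.mono h0 le_rfl (ht (m + 1).zero_le) (ht (m + 1).le_succ) hm]
        _ = _ := by field_simp; push_cast; ring)
  exact ⟨j, Finset.mem_range.mp hj, hjω⟩

/-- The Young–Loève (sewing) estimate, with the partial sums of `youngLoeveConst θ`. Deleting a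
point `t (j + 1)` with `ω (t j) (t (j + 2)) ≤ 2 ω(t 0, t n) / (n - 1)`, which exists by
`exists_skip_le`, costs at most `K (2 / (n - 1)) ^ θ ω(t 0, t n) ^ θ`. -/
theorem IsControlOn.norm_partitionSum_sub_le_sum (hω : IsControlOn ω a b) (hθ : 0 ≤ θ)
    (hK : 0 ≤ K) (hΞ₀ : ∀ s, Ξ s s = 0)
    (hΞ : ∀ s v u, a ≤ s → s ≤ v → v ≤ u → u ≤ b → ‖Ξ s u - Ξ s v - Ξ v u‖ ≤ K * ω s u ^ θ)
    {t : ℕ → ℝ} {n : ℕ} (ht : Monotone t) (h0 : a ≤ t 0) (hn : t n ≤ b) :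
    ‖partitionSum Ξ t n - Ξ (t 0) (t n)‖ ≤
      K * (∑ k ∈ Finset.range (n - 1), (2 / ((k : ℝ) + 1)) ^ θ) * ω (t 0) (t n) ^ θ := by
  induction n using Nat.strong_induction_on generalizing t with
  | _ n ih =>
  match n, ih with
  | 0, _ => simp [hΞ₀]
  | 1, _ => simp [partitionSum]
  | m + 2, ih =>
    obtain ⟨j, hj, hjω⟩ := hω.exists_skip_le ht h0 hn
    obtain ⟨k, rfl⟩ : ∃ k, m = j + k := Nat.exists_eq_add_of_le (Nat.lt_succ_iff.mp hj)
    set t' : ℕ → ℝ := fun i => t (if i ≤ j then i else i + 1)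
    have ht' : Monotone t' := fun i i' hii' => ht (by split_ifs <;> omega)
    have ht'0 : t' 0 = t 0 := by simp [t']
    have ht'n : t' (j + k + 1) = t (j + k + 2) := by simp [t']
    have hIH := ih (j + k + 1) (by omega) ht' (ht'0 ▸ h0) (ht'n ▸ hn)
    rw [ht'0, ht'n] at hIH
    have hj0 : a ≤ t j := h0.trans (ht j.zero_le)
    have hj2 : t (j + 2) ≤ b := (ht (by omega)).trans hn
    have hdel : ‖Ξ (t j) (t (j + 2)) - Ξ (t j) (t (j + 1)) - Ξ (t (j + 1)) (t (j + 2))‖ ≤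
        K * ((2 / ((↑(j + k) : ℝ) + 1)) ^ θ * ω (t 0) (t (j + k + 2)) ^ θ) := by
      refine (hΞ _ _ _ hj0 (ht (by omega)) (ht (by omega)) hj2).trans ?_
      rw [← Real.mul_rpow (by positivity) (hω.nonneg _ _ h0 (ht (Nat.zero_le _)) hn)]
      gcongr
      exact hω.nonneg _ _ hj0 (ht (by omega)) hj2
    calc ‖partitionSum Ξ t (j + k + 2) - Ξ (t 0) (t (j + k + 2))‖
        = ‖(partitionSum Ξ t' (j + k + 1) - Ξ (t 0) (t (j + k + 2))) -
            (Ξ (t j) (t (j + 2)) - Ξ (t j) (t (j + 1)) - Ξ (t (j + 1)) (t (j + 2)))‖ := by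
          rw [partitionSum_delete]; congr 1; abel
      _ ≤ _ := norm_sub_le _ _
      _ ≤ _ := add_le_add hIH hdel
      _ = _ := by
          rw [show j + k + 2 - 1 = j + k + 1 by omega, Finset.sum_range_succ,
            show j + k + 1 - 1 = j + k by omega]
          ring

theorem IsControlOn.norm_partitionSum_sub_le (hω : IsControlOn ω a b) (hθ : 1 < θ) (hK : 0 ≤ K)
    (hΞ₀ : ∀ s, Ξ s s = 0)
    (hΞ : ∀ s v u, a ≤ s → s ≤ v → v ≤ u → u ≤ b → ‖Ξ s u - Ξ s v - Ξ v u‖ ≤ K * ω s u ^ θ)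
    {t : ℕ → ℝ} {n : ℕ} (ht : Monotone t) (h0 : a ≤ t 0) (hn : t n ≤ b) :
    ‖partitionSum Ξ t n - Ξ (t 0) (t n)‖ ≤ K * youngLoeveConst θ * ω (t 0) (t n) ^ θ := by
  refine (hω.norm_partitionSum_sub_le_sum (by linarith) hK hΞ₀ hΞ ht h0 hn).trans ?_
  gcongr
  · exact Real.rpow_nonneg (hω.nonneg _ _ h0 (ht n.zero_le) hn) θ
  · exact sum_le_youngLoeveConst hθ _

end Sewing

section Comparison

def clampPartition (s : ℕ → ℝ) (u v : ℝ) : ℕ → ℝ := fun j => max u (min (s j) v)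

variable {M : Type*} [AddCommMonoid M] {Ξ : ℝ → ℝ → M}

/-- Both sides are `Ξ` on the intersection `[u, v] ∩ [u', v']`, or `Ξ x x` for some `x`
when the intersection is empty. -/
theorem germ_clamp_comm (hΞ₀ : ∀ x, Ξ x x = 0) {u v u' v' : ℝ} (huv : u ≤ v) (hu'v' : u' ≤ v') :
    Ξ (max u (min u' v)) (max u (min v' v)) = Ξ (max u' (min u v')) (max u' (min v v')) := by
  rcases lt_or_ge v' u with h | h
  · rw [max_eq_left ((min_le_left _ _).trans (hu'v'.trans h.le)),
      max_eq_left ((min_le_left _ _).trans h.le), min_eq_right h.le,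
      min_eq_right (h.le.trans huv), max_eq_right hu'v', hΞ₀, hΞ₀]
  rcases lt_or_ge v u' with h' | h'
  · rw [min_eq_right h'.le, min_eq_right (h'.le.trans hu'v'), max_eq_right huv, min_eq_left h,
      max_eq_left (huv.trans h'.le), min_eq_left (h'.le.trans hu'v'), max_eq_left h'.le, hΞ₀, hΞ₀]
  rw [min_eq_left h', min_eq_left h, max_eq_right (le_min h huv), max_eq_right (le_min h' hu'v'),
    max_comm u u', min_comm v' v]

theorem sum_partitionSum_clampPartition_comm (hΞ₀ : ∀ x, Ξ x x = 0) {t s : ℕ → ℝ} {n m : ℕ}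
    (ht : Monotone t) (hs : Monotone s) :
    ∑ i ∈ Finset.range n, partitionSum Ξ (clampPartition s (t i) (t (i + 1))) m =
      ∑ j ∈ Finset.range m, partitionSum Ξ (clampPartition t (s j) (s (j + 1))) n := by
  simp only [partitionSum, clampPartition]
  rw [Finset.sum_comm]
  exact Finset.sum_congr rfl fun j _ => Finset.sum_congr rfl fun i _ =>
    germ_clamp_comm hΞ₀ (ht i.le_succ) (hs j.le_succ)

variable {W : Type*} [NormedAddCommGroup W] {Ξ : ℝ → ℝ → W} {ω : ℝ → ℝ → ℝ} {a b K θ : ℝ}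
  {t s : ℕ → ℝ} {n m : ℕ}

theorem IsControlOn.norm_partitionSum_sub_sum_clampPartition_le (hω : IsControlOn ω a b)
    (hθ : 1 < θ) (hK : 0 ≤ K) (hΞ₀ : ∀ s, Ξ s s = 0)
    (hΞ : ∀ s v u, a ≤ s → s ≤ v → v ≤ u → u ≤ b → ‖Ξ s u - Ξ s v - Ξ v u‖ ≤ K * ω s u ^ θ)
    (ht : Monotone t) (h0 : a ≤ t 0) (hn : t n ≤ b) (hs : Monotone s) (hs0 : s 0 ≤ t 0)
    (hsm : t n ≤ s m) :
    ‖partitionSum Ξ t n -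
        ∑ i ∈ Finset.range n, partitionSum Ξ (clampPartition s (t i) (t (i + 1))) m‖ ≤
      K * youngLoeveConst θ * partitionSum (fun u v => ω u v ^ θ) t n := by
  rw [partitionSum, partitionSum, ← Finset.sum_sub_distrib, Finset.mul_sum]
  refine (norm_sum_le _ _).trans (Finset.sum_le_sum fun i hi => ?_)
  rw [Finset.mem_range] at hi
  set c := clampPartition s (t i) (t (i + 1))
  have hc : Monotone c := fun j j' h => max_le_max le_rfl (min_le_min_right _ (hs h))
  have hc0 : c 0 = t i := max_eq_left ((min_le_left _ _).trans (hs0.trans (ht i.zero_le)))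
  have hcm : c m = t (i + 1) := by
    simp only [c, clampPartition, min_eq_right ((ht hi).trans hsm), max_eq_right (ht i.le_succ)]
  have h := hω.norm_partitionSum_sub_le hθ hK hΞ₀ hΞ hc (hc0 ▸ h0.trans (ht i.zero_le))
    (hcm ▸ (ht hi).trans hn)
  rwa [hc0, hcm, norm_sub_rev] at h

/-- Two partitions are compared through the common refinement formed by the partitions
`clampPartition s (t i) (t (i + 1))` of the intervals of `t`; by `germ_clamp_comm` its
Riemann sum is symmetric in `t` and `s`. -/
theorem IsControlOn.norm_partitionSum_sub_partitionSum_le (hω : IsControlOn ω a b)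
    (hθ : 1 < θ) (hK : 0 ≤ K) (hΞ₀ : ∀ s, Ξ s s = 0)
    (hΞ : ∀ s v u, a ≤ s → s ≤ v → v ≤ u → u ≤ b → ‖Ξ s u - Ξ s v - Ξ v u‖ ≤ K * ω s u ^ θ)
    (ht : Monotone t) (h0 : a ≤ t 0) (hn : t n ≤ b) (hs : Monotone s) (hst0 : s 0 = t 0)
    (hstn : s m = t n) :
    ‖partitionSum Ξ t n - partitionSum Ξ s m‖ ≤ K * youngLoeveConst θ *
      (partitionSum (fun u v => ω u v ^ θ) t n + partitionSum (fun u v => ω u v ^ θ) s m) := by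
  have ht' := hω.norm_partitionSum_sub_sum_clampPartition_le hθ hK hΞ₀ hΞ ht h0 hn hs hst0.le
    hstn.ge
  have hs' := hω.norm_partitionSum_sub_sum_clampPartition_le hθ hK hΞ₀ hΞ hs (hst0 ▸ h0)
    (hstn ▸ hn) ht hst0.ge hstn.le
  rw [sum_partitionSum_clampPartition_comm hΞ₀ ht hs] at ht'
  calc ‖partitionSum Ξ t n - partitionSum Ξ s m‖ ≤ _ + _ := norm_sub_le_norm_sub_add_norm_sub _
        (∑ j ∈ Finset.range m, partitionSum Ξ (clampPartition t (s j) (s (j + 1))) n) _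
    _ ≤ _ := by rw [norm_sub_rev _ (partitionSum Ξ s m)]; linarith

end Comparison

section YoungIntegral

theorem exists_forall_norm_sub_lt_of_cauchy {ι W : Type*} [NormedAddCommGroup W] [CompleteSpace W]
    (S : ι → W) (fine : ℝ → ι → Prop) (hmono : ∀ δ δ' i, δ ≤ δ' → fine δ i → fine δ' i)
    (hne : ∀ δ > 0, ∃ i, fine δ i)
    (hcauchy : ∀ ε > 0, ∃ δ > 0, ∀ i j, fine δ i → fine δ j → ‖S i - S j‖ < ε) :
    ∃ I, ∀ ε > 0, ∃ δ > 0, ∀ i, fine δ i → ‖S i - I‖ < ε := by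
  have hb : (⨅ δ ∈ Ioi (0 : ℝ), 𝓟 {i | fine δ i}).HasBasis (fun δ => 0 < δ)
      fun δ => {i | fine δ i} := by
    refine hasBasis_biInf_principal
      (fun δ hδ δ' hδ' => ⟨min δ δ', mem_Ioi.mpr (lt_min hδ hδ'), ?_, ?_⟩) ⟨1, mem_Ioi.mpr one_pos⟩
    · exact fun i => hmono _ _ i (min_le_left _ _)
    · exact fun i => hmono _ _ i (min_le_right _ _)
  have := hb.neBot_iff.mpr fun hδ => hne _ hδ
  have hS : Cauchy (map S (⨅ δ ∈ Ioi (0 : ℝ), 𝓟 {i | fine δ i})) := by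
    refine Metric.cauchy_iff.mpr ⟨inferInstance, fun ε hε => ?_⟩
    obtain ⟨δ, hδ, h⟩ := hcauchy ε hε
    refine ⟨S '' {i | fine δ i}, image_mem_map (hb.mem_of_mem hδ), ?_⟩
    rintro _ ⟨i, hi, rfl⟩ _ ⟨j, hj, rfl⟩
    rw [dist_eq_norm]
    exact h i j hi hj
  obtain ⟨I, hI⟩ := cauchy_map_iff_exists_tendsto.mp hS
  refine ⟨I, fun ε hε => ?_⟩
  obtain ⟨δ, hδ, h⟩ := (hb.tendsto_iff Metric.nhds_basis_ball).mp hI ε hε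
  exact ⟨δ, hδ, fun i hi => by simpa [dist_eq_norm] using h i hi⟩

variable {V W : Type*} [NormedAddCommGroup V] [NormedSpace ℝ V] [NormedAddCommGroup W]
  [NormedSpace ℝ W]

structure IsTaggedPartition (a b : ℝ) {n : ℕ} (t : Fin (n + 1) → ℝ) (τ : Fin n → ℝ) : Prop where
  monotone : Monotone t
  zero : t 0 = a
  last : t (Fin.last n) = b
  tag_mem : ∀ i, τ i ∈ Icc (t i.castSucc) (t i.succ)

theorem exists_isTaggedPartition {a b δ : ℝ} (hab : a ≤ b) (hδ : 0 < δ) :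
    ∃ (n : ℕ) (t : Fin (n + 1) → ℝ) (τ : Fin n → ℝ),
      IsTaggedPartition a b t τ ∧ ∀ i : Fin n, t i.succ - t i.castSucc < δ := by
  obtain ⟨N, hN⟩ := exists_nat_one_div_lt (div_pos hδ (by linarith : 0 < b - a + 1))
  set h := (b - a) / (N + 1)
  have hhδ : h < δ := by
    rw [lt_div_iff₀ (by linarith), one_div_mul_eq_div] at hN
    calc h ≤ (b - a + 1) / (N + 1) := div_le_div_of_nonneg_right (by linarith) (by positivity)
      _ < δ := hN
  have ht : Monotone fun i : Fin (N + 2) => a + i * h := fun i j hij => by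
    dsimp only; gcongr; exact_mod_cast hij
  refine ⟨N + 1, fun i => a + i * h, fun i => a + i.castSucc * h,
    ⟨ht, by simp, ?_, fun i => ⟨le_rfl, ht (Fin.castSucc_le_succ i)⟩⟩, fun i => ?_⟩
  · simp only [Fin.val_last, h]
    push_cast
    field_simp
    ring
  · simp only [Fin.val_succ, Fin.val_castSucc]
    push_cast
    linarith

theorem IsTaggedPartition.partitionSum_rpow_le {a b : ℝ} {n : ℕ} {t : Fin (n + 1) → ℝ}
    {τ : Fin n → ℝ} {ω : ℝ → ℝ → ℝ} (hP : IsTaggedPartition a b t τ) (hω : IsControlOn ω a b)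
    {ε θ : ℝ} (hε : 0 ≤ ε) (hθ : 1 ≤ θ) (hmesh : ∀ i : Fin n, ω (t i.castSucc) (t i.succ) ≤ ε) :
    partitionSum (fun s u => ω s u ^ θ) (toNatPartition t) n ≤ ε ^ (θ - 1) * ω a b := by
  have hωi : ∀ i : Fin n, 0 ≤ ω (t i.castSucc) (t i.succ) := fun i =>
    hω.nonneg _ _ (hP.zero ▸ hP.monotone (Fin.zero_le _)) (hP.monotone (Fin.castSucc_le_succ i))
      (hP.last ▸ hP.monotone (Fin.le_last _))
  calc partitionSum (fun s u => ω s u ^ θ) (toNatPartition t) n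
      ≤ ∑ i : Fin n, ε ^ (θ - 1) * ω (t i.castSucc) (t i.succ) := by
        rw [← Fin.sum_eq_partitionSum_toNatPartition]
        exact Finset.sum_le_sum fun i _ => by
          simpa using rpow_le_rpow_sub_mul (hωi i) (hmesh i) zero_le_one hθ
    _ = ε ^ (θ - 1) * partitionSum ω (toNatPartition t) n := by
        rw [← Finset.mul_sum, Fin.sum_eq_partitionSum_toNatPartition]
    _ ≤ ε ^ (θ - 1) * ω a b := by
        have h := hω.partitionSum_le hP.monotone.toNatPartition
          (by rw [toNatPartition_zero, hP.zero]) (by rw [toNatPartition_self, hP.last])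
        rw [toNatPartition_zero, toNatPartition_self, hP.zero, hP.last] at h
        gcongr

def taggedSum (X : ℝ → V →L[ℝ] W) (Y : ℝ → V) {n : ℕ} (t : Fin (n + 1) → ℝ) (τ : Fin n → ℝ) :
    W :=
  ∑ i : Fin n, X (τ i) (Y (t i.succ) - Y (t i.castSucc))

variable {X : ℝ → V →L[ℝ] W} {Y : ℝ → V} {ω : ℝ → ℝ → ℝ} {a b h₁ h₂ : ℝ}

section ControlledPaths

variable (hω : IsControlOn ω a b) (hh₁ : 0 ≤ h₁) (hh₂ : 0 ≤ h₂)
  (hX : ∀ s t, a ≤ s → s ≤ t → t ≤ b → ‖X t - X s‖ ≤ ω s t ^ h₁)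
  (hY : ∀ s t, a ≤ s → s ≤ t → t ≤ b → ‖Y t - Y s‖ ≤ ω s t ^ h₂)
include hω hh₁ hh₂ hX hY

theorem norm_sub_apply_sub_le {s p q p' q' u : ℝ} (hs : a ≤ s) (hsp : s ≤ p) (hpq : p ≤ q)
    (hqu : q ≤ u) (hsp' : s ≤ p') (hpq' : p' ≤ q') (hq'u : q' ≤ u) (hu : u ≤ b) :
    ‖(X q - X p) (Y q' - Y p')‖ ≤ ω s u ^ (h₁ + h₂) := by
  have hωsu := hω.nonneg s u hs (hsp.trans (hpq.trans hqu)) hu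
  calc ‖(X q - X p) (Y q' - Y p')‖ ≤ ‖X q - X p‖ * ‖Y q' - Y p'‖ :=
        ContinuousLinearMap.le_opNorm _ _
    _ ≤ ω s u ^ h₁ * ω s u ^ h₂ := by
      gcongr
      · refine (hX p q (hs.trans hsp) hpq (hqu.trans hu)).trans (Real.rpow_le_rpow ?_ ?_ hh₁)
        · exact hω.nonneg p q (hs.trans hsp) hpq (hqu.trans hu)
        · exact hω.mono hs hsp hpq hqu hu
      · refine (hY p' q' (hs.trans hsp') hpq' (hq'u.trans hu)).trans (Real.rpow_le_rpow ?_ ?_ hh₂)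
        · exact hω.nonneg p' q' (hs.trans hsp') hpq' (hq'u.trans hu)
        · exact hω.mono hs hsp' hpq' hq'u hu
    _ = ω s u ^ (h₁ + h₂) := (Real.rpow_add_of_nonneg hωsu hh₁ hh₂).symm

theorem norm_taggedSum_sub_partitionSum_le {n : ℕ} {t : Fin (n + 1) → ℝ} {τ : Fin n → ℝ}
    (hP : IsTaggedPartition a b t τ) :
    ‖taggedSum X Y t τ - partitionSum (fun s u => X s (Y u - Y s)) (toNatPartition t) n‖ ≤
      partitionSum (fun s u => ω s u ^ (h₁ + h₂)) (toNatPartition t) n := by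
  rw [← Fin.sum_eq_partitionSum_toNatPartition, ← Fin.sum_eq_partitionSum_toNatPartition,
    taggedSum, ← Finset.sum_sub_distrib]
  refine (norm_sum_le _ _).trans (Finset.sum_le_sum fun i _ => ?_)
  rw [← sub_apply]
  obtain ⟨hτ₁, hτ₂⟩ := hP.tag_mem i
  have ha : a ≤ t i.castSucc := hP.zero ▸ hP.monotone (Fin.zero_le _)
  have hb : t i.succ ≤ b := hP.last ▸ hP.monotone (Fin.le_last _)
  exact norm_sub_apply_sub_le hω hh₁ hh₂ hX hY ha le_rfl hτ₁ hτ₂ le_rfl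
    (hP.monotone (Fin.castSucc_le_succ i)) le_rfl hb

theorem norm_taggedSum_sub_taggedSum_le (hθ : 1 < h₁ + h₂) {ε : ℝ} (hε : 0 ≤ ε) {n m : ℕ}
    {t : Fin (n + 1) → ℝ} {τ : Fin n → ℝ} {s : Fin (m + 1) → ℝ} {σ : Fin m → ℝ}
    (hP : IsTaggedPartition a b t τ) (hPε : ∀ i : Fin n, ω (t i.castSucc) (t i.succ) ≤ ε)
    (hQ : IsTaggedPartition a b s σ) (hQε : ∀ j : Fin m, ω (s j.castSucc) (s j.succ) ≤ ε) :
    ‖taggedSum X Y t τ - taggedSum X Y s σ‖ ≤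
      (2 + 2 * youngLoeveConst (h₁ + h₂)) * (ε ^ (h₁ + h₂ - 1) * ω a b) := by
  have hΞ : ∀ s v u, a ≤ s → s ≤ v → v ≤ u → u ≤ b →
      ‖X s (Y u - Y s) - X s (Y v - Y s) - X v (Y u - Y v)‖ ≤ 1 * ω s u ^ (h₁ + h₂) := by
    intro s v u hs hsv hvu hu
    have e : X s (Y u - Y s) - X s (Y v - Y s) - X v (Y u - Y v) = -((X v - X s) (Y u - Y v)) := by
      simp only [sub_apply, map_sub]
      abel
    rw [e, norm_neg, one_mul]
    exact norm_sub_apply_sub_le hω hh₁ hh₂ hX hY hs le_rfl hsv hvu hsv hvu le_rfl hu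
  have hcomp := hω.norm_partitionSum_sub_partitionSum_le hθ zero_le_one (by simp) hΞ
    hP.monotone.toNatPartition (by rw [toNatPartition_zero, hP.zero])
    (by rw [toNatPartition_self, hP.last]) hQ.monotone.toNatPartition
    (by rw [toNatPartition_zero, toNatPartition_zero, hP.zero, hQ.zero])
    (by rw [toNatPartition_self, toNatPartition_self, hP.last, hQ.last])
  have hPs := norm_taggedSum_sub_partitionSum_le hω hh₁ hh₂ hX hY hP
  have hQs := norm_taggedSum_sub_partitionSum_le hω hh₁ hh₂ hX hY hQ
  have hPω := hP.partitionSum_rpow_le hω hε hθ.le hPε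
  have hQω := hQ.partitionSum_rpow_le hω hε hθ.le hQε
  have hL := youngLoeveConst_nonneg (h₁ + h₂)
  set Pt := partitionSum (fun s u => X s (Y u - Y s)) (toNatPartition t) n
  set Ps := partitionSum (fun s u => X s (Y u - Y s)) (toNatPartition s) m
  calc ‖taggedSum X Y t τ - taggedSum X Y s σ‖
      ≤ ‖taggedSum X Y t τ - Pt‖ + ‖Pt - Ps‖ + ‖taggedSum X Y s σ - Ps‖ := by
        simpa only [dist_eq_norm, norm_sub_rev (taggedSum X Y s σ)] using
          dist_triangle4 (taggedSum X Y t τ) Pt Ps (taggedSum X Y s σ)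
    _ ≤ _ := by nlinarith

theorem exists_hasYoungIntegral_of_control [CompleteSpace W] (hsmall : SmallOnShortIntervals ω a b)
    (hab : a ≤ b) (hθ : 1 < h₁ + h₂) : ∃ I, HasYoungIntegral a b X Y I := by
  let fine : ℝ → (Σ n : ℕ, (Fin (n + 1) → ℝ) × (Fin n → ℝ)) → Prop := fun δ P =>
    IsTaggedPartition a b P.2.1 P.2.2 ∧ ∀ i : Fin P.1, P.2.1 i.succ - P.2.1 i.castSucc < δ
  obtain ⟨I, hI⟩ := exists_forall_norm_sub_lt_of_cauchy (fun P => taggedSum X Y P.2.1 P.2.2) fine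
    (fun δ δ' P hδδ' hP => ⟨hP.1, fun i => (hP.2 i).trans_le hδδ'⟩)
    (fun δ hδ => by
      obtain ⟨n, t, τ, hP⟩ := exists_isTaggedPartition hab hδ
      exact ⟨⟨n, t, τ⟩, hP⟩)
    (by
      intro ε hε
      obtain ⟨ρ, hρ, hρε⟩ := exists_pos_mul_rpow_lt ((2 + 2 * youngLoeveConst (h₁ + h₂)) * ω a b)
        (sub_pos.mpr hθ) hε
      obtain ⟨δ, hδ, hδω⟩ := hsmall ρ hρ
      have hmesh : ∀ P, fine δ P → ∀ i : Fin P.1, ω (P.2.1 i.castSucc) (P.2.1 i.succ) ≤ ρ :=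
        fun P hP i => (hδω _ _ (hP.1.zero ▸ hP.1.monotone (Fin.zero_le _))
          (hP.1.monotone (Fin.castSucc_le_succ i)) (hP.1.last ▸ hP.1.monotone (Fin.le_last _))
          (hP.2 i)).le
      refine ⟨δ, hδ, fun P Q hP hQ => ?_⟩
      calc _ ≤ (2 + 2 * youngLoeveConst (h₁ + h₂)) * (ρ ^ (h₁ + h₂ - 1) * ω a b) :=
            norm_taggedSum_sub_taggedSum_le hω hh₁ hh₂ hX hY hθ hρ.le hP.1 (hmesh P hP) hQ.1
              (hmesh Q hQ)
        _ < ε := by linarith)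
  exact ⟨I, fun ε hε => let ⟨δ, hδ, h⟩ := hI ε hε
    ⟨δ, hδ, fun n t τ ht h0 hn hτ hmesh => h ⟨n, t, τ⟩ ⟨⟨ht, h0, hn, hτ⟩, hmesh⟩⟩⟩

end ControlledPaths

end YoungIntegral

section PVariation

noncomputable def partitionSup (w : ℝ → ℝ → ℝ≥0∞) (s t : ℝ) : ℝ≥0∞ :=
  ⨆ (P : ℕ × (ℕ → ℝ)) (_ : Monotone P.2 ∧ P.2 0 = s ∧ P.2 P.1 = t), partitionSum w P.2 P.1

variable {w : ℝ → ℝ → ℝ≥0∞} {a b s t u : ℝ}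

theorem partitionSum_le_partitionSup {c : ℕ → ℝ} {n : ℕ} (hc : Monotone c) (h0 : c 0 = s)
    (hn : c n = t) : partitionSum w c n ≤ partitionSup w s t :=
  le_iSup₂_of_le (f := fun (P : ℕ × (ℕ → ℝ)) _ => partitionSum w P.2 P.1) (n, c) ⟨hc, h0, hn⟩
    le_rfl

theorem partitionSup_le {A : ℝ≥0∞}
    (h : ∀ n (c : ℕ → ℝ), Monotone c → c 0 = s → c n = t → partitionSum w c n ≤ A) :
    partitionSup w s t ≤ A :=
  iSup₂_le fun P hP => h P.1 P.2 hP.1 hP.2.1 hP.2.2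

theorem exists_partition_one (hst : s ≤ t) :
    ∃ c : ℕ → ℝ, Monotone c ∧ c 0 = s ∧ c 1 = t := by
  refine ⟨fun k => if k = 0 then s else t, fun k l hkl => ?_, rfl, rfl⟩
  dsimp only
  split_ifs <;> first | exact le_rfl | exact hst | omega

theorem le_partitionSup (hst : s ≤ t) : w s t ≤ partitionSup w s t := by
  obtain ⟨c, hc, h0, h1⟩ := exists_partition_one hst
  simpa [partitionSum, h0, h1] using partitionSum_le_partitionSup (w := w) hc h0 h1

theorem partitionSup_add_le (hsu : s ≤ u) (hut : u ≤ t) :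
    partitionSup w s u + partitionSup w u t ≤ partitionSup w s t := by
  obtain ⟨c₁, hc₁⟩ := exists_partition_one hsu
  obtain ⟨c₂, hc₂⟩ := exists_partition_one hut
  refine ENNReal.biSup_add_biSup_le' ⟨(1, c₁), hc₁⟩ ⟨(1, c₂), hc₂⟩ ?_
  rintro ⟨n₁, c₁⟩ ⟨hm₁, h0₁, hn₁⟩ ⟨n₂, c₂⟩ ⟨hm₂, h0₂, hn₂⟩
  have h : c₁ n₁ = c₂ 0 := hn₁.trans h0₂.symm
  rw [← partitionSum_concatPartition h]
  refine partitionSum_le_partitionSup (hm₁.concatPartition hm₂ h) ?_ ?_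
  · rw [concatPartition_of_le (Nat.zero_le _)]; exact h0₁
  · rw [concatPartition_add h]; exact hn₂

theorem partitionSup_le_partitionSup (has : a ≤ s) (hst : s ≤ t) (htb : t ≤ b) :
    partitionSup w s t ≤ partitionSup w a b :=
  calc partitionSup w s t ≤ partitionSup w a s + partitionSup w s t + partitionSup w t b := by
        rw [add_comm (partitionSup w a s)]; exact le_self_add.trans le_self_add
    _ ≤ partitionSup w a b :=
        (add_le_add (partitionSup_add_le has hst) le_rfl).trans
          (partitionSup_add_le (has.trans hst) htb)

theorem isControlOn_toReal_partitionSup (h : partitionSup w a b ≠ ⊤) :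
    IsControlOn (fun s t => (partitionSup w s t).toReal) a b where
  nonneg _ _ _ _ _ := ENNReal.toReal_nonneg
  superadditive s u t hs hsu hut ht := by
    have hfin : ∀ s t, a ≤ s → s ≤ t → t ≤ b → partitionSup w s t ≠ ⊤ := fun s t hs hst ht =>
      ne_top_of_le_ne_top h (partitionSup_le_partitionSup hs hst ht)
    rw [← ENNReal.toReal_add (hfin s u hs hsu (hut.trans ht)) (hfin u t (hs.trans hsu) hut ht)]
    exact ENNReal.toReal_mono (hfin s t hs (hsu.trans hut) ht) (partitionSup_add_le hsu hut)

end PVariation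

section PathVariation

variable {V : Type*} [NormedAddCommGroup V] {x : ℝ → V} {p q a b s t : ℝ}

/-- `pVarControl p x s t = Var_p(x; [s, t]) ^ p`, see `pVar_eq_pVarControl_rpow`. -/
noncomputable def pVarControl (p : ℝ) (x : ℝ → V) (s t : ℝ) : ℝ≥0∞ :=
  partitionSup (fun s t => ENNReal.ofReal (‖x t - x s‖ ^ p)) s t

theorem pVar_eq_pVarControl_rpow (hp : 0 ≤ p) : pVar p a b x = pVarControl p x a b ^ (1 / p) := by
  have hterm : ∀ u v, (‖x v - x u‖₊ : ℝ≥0∞) ^ p = ENNReal.ofReal (‖x v - x u‖ ^ p) := fun u v => by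
    rw [← ENNReal.ofReal_rpow_of_nonneg (norm_nonneg _) hp, ofReal_norm, enorm_eq_nnnorm]
  unfold pVar
  congr 1
  simp only [hterm]
  apply le_antisymm
  · refine iSup_le fun n => iSup_le fun t => iSup_le fun ⟨ht, h0, hn⟩ => ?_
    rw [Fin.sum_eq_partitionSum_toNatPartition (Ξ := fun u v => ENNReal.ofReal (‖x v - x u‖ ^ p))]
    exact partitionSum_le_partitionSup ht.toNatPartition (by rw [toNatPartition_zero, h0])
      (by rw [toNatPartition_self, hn])
  · refine partitionSup_le fun n c hc h0 hn => ?_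
    rw [← Fin.sum_eq_partitionSum (fun i : Fin (n + 1) => c i) fun i => rfl]
    exact le_iSup_of_le n (le_iSup_of_le (fun i => c i)
      (le_iSup_of_le ⟨fun i j hij => hc hij, h0, hn⟩ le_rfl))

theorem pVar_lt_top_iff (hp : 0 < p) : pVar p a b x < ⊤ ↔ pVarControl p x a b < ⊤ := by
  rw [pVar_eq_pVarControl_rpow hp.le, ENNReal.rpow_lt_top_iff_of_pos (by positivity)]

theorem pVarControl_ne_top (h : pVarControl p x a b ≠ ⊤) (has : a ≤ s) (hst : s ≤ t)
    (htb : t ≤ b) : pVarControl p x s t ≠ ⊤ :=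
  ne_top_of_le_ne_top h (partitionSup_le_partitionSup has hst htb)

theorem isControlOn_pVarControl (h : pVarControl p x a b ≠ ⊤) :
    IsControlOn (fun s t => (pVarControl p x s t).toReal) a b :=
  isControlOn_toReal_partitionSup h

theorem norm_sub_le_pVarControl (hp : 0 < p) (h : pVarControl p x s t ≠ ⊤) (hst : s ≤ t) :
    ‖x t - x s‖ ≤ (pVarControl p x s t).toReal ^ (1 / p) := by
  have h1 := ENNReal.toReal_mono h
    (le_partitionSup (w := fun s t => ENNReal.ofReal (‖x t - x s‖ ^ p)) hst)
  rw [ENNReal.toReal_ofReal (by positivity)] at h1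
  calc ‖x t - x s‖ = (‖x t - x s‖ ^ p) ^ (1 / p) := by
        rw [one_div, Real.rpow_rpow_inv (norm_nonneg _) hp.ne']
    _ ≤ (pVarControl p x s t).toReal ^ (1 / p) :=
        Real.rpow_le_rpow (by positivity) h1 (by positivity)

theorem pVarControl_le_mul {ρ : ℝ} (hρ0 : 0 ≤ ρ)
    (hρ : ∀ u v, s ≤ u → u ≤ v → v ≤ t → ‖x v - x u‖ ≤ ρ) (hq : 0 ≤ q) (hqp : q ≤ p) :
    pVarControl p x s t ≤ ENNReal.ofReal (ρ ^ (p - q)) * pVarControl q x s t := by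
  refine partitionSup_le fun n c hc h0 hn => ?_
  calc partitionSum (fun s t => ENNReal.ofReal (‖x t - x s‖ ^ p)) c n
      ≤ ∑ i ∈ Finset.range n,
          ENNReal.ofReal (ρ ^ (p - q)) * ENNReal.ofReal (‖x (c (i + 1)) - x (c i)‖ ^ q) := by
        refine Finset.sum_le_sum fun i hi => ?_
        rw [Finset.mem_range] at hi
        rw [← ENNReal.ofReal_mul (by positivity)]
        refine ENNReal.ofReal_le_ofReal (rpow_le_rpow_sub_mul (norm_nonneg _) ?_ hq hqp)
        exact hρ _ _ (h0 ▸ hc i.zero_le) (hc i.le_succ) (hn ▸ hc hi)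
    _ = ENNReal.ofReal (ρ ^ (p - q)) *
          partitionSum (fun s t => ENNReal.ofReal (‖x t - x s‖ ^ q)) c n :=
        (Finset.mul_sum _ _ _).symm
    _ ≤ ENNReal.ofReal (ρ ^ (p - q)) * pVarControl q x s t := by
        gcongr
        exact partitionSum_le_partitionSup hc h0 hn

theorem pVarControl_lt_top (hx : ContinuousOn x (Icc a b)) (hq0 : 0 ≤ q) (hqp : q ≤ p)
    (hq : pVarControl q x a b < ⊤) : pVarControl p x a b < ⊤ := by
  obtain ⟨C, hC⟩ := isCompact_Icc.exists_bound_of_continuousOn hx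
  have hρ : ∀ u v, a ≤ u → u ≤ v → v ≤ b → ‖x v - x u‖ ≤ 2 * |C| := fun u v hu huv hv => by
    linarith [norm_sub_le (x v) (x u), hC u ⟨hu, huv.trans hv⟩, hC v ⟨hu.trans huv, hv⟩,
      le_abs_self C]
  exact (pVarControl_le_mul (by positivity) hρ hq0 hqp).trans_lt
    (ENNReal.mul_lt_top ENNReal.ofReal_lt_top hq)

theorem smallOnShortIntervals_pVarControl (hx : ContinuousOn x (Icc a b)) (hq0 : 0 ≤ q)
    (hqp : q < p) (hq : pVarControl q x a b < ⊤) :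
    SmallOnShortIntervals (fun s t => (pVarControl p x s t).toReal) a b := by
  intro ε hε
  obtain ⟨ρ, hρ, hρε⟩ := exists_pos_mul_rpow_lt (pVarControl q x a b).toReal (sub_pos.mpr hqp) hε
  obtain ⟨δ, hδ, hδx⟩ := Metric.uniformContinuousOn_iff.mp
    (isCompact_Icc.uniformContinuousOn_of_continuous hx) ρ hρ
  refine ⟨δ, hδ, fun s t hs hst ht hts => ?_⟩
  have hρx : ∀ u v, s ≤ u → u ≤ v → v ≤ t → ‖x v - x u‖ ≤ ρ := fun u v hsu huv hvt => by
    have h := hδx v ⟨hs.trans (hsu.trans huv), hvt.trans ht⟩ u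
      ⟨hs.trans hsu, (huv.trans hvt).trans ht⟩
      (by rw [Real.dist_eq, abs_of_nonneg (by linarith)]; linarith)
    rw [dist_eq_norm] at h
    exact h.le
  calc (pVarControl p x s t).toReal
      ≤ (ENNReal.ofReal (ρ ^ (p - q)) * pVarControl q x a b).toReal :=
        ENNReal.toReal_mono (ENNReal.mul_lt_top ENNReal.ofReal_lt_top hq).ne
          ((pVarControl_le_mul hρ.le hρx hq0 hqp.le).trans
            (by gcongr; exact partitionSup_le_partitionSup hs hst ht))
    _ = (pVarControl q x a b).toReal * ρ ^ (p - q) := by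
        rw [ENNReal.toReal_mul, ENNReal.toReal_ofReal (by positivity), mul_comm]
    _ < ε := hρε

end PathVariation

section Young

variable {V W : Type*} [NormedAddCommGroup V] [NormedSpace ℝ V] [NormedAddCommGroup W]
  [NormedSpace ℝ W]

/-- Young's theorem. Both paths are controlled by `ω = Var_q'(X) ^ q' + Var_p'(Y) ^ p'` for
exponents `q' > q`, `p' > p` that still satisfy `1 / p' + 1 / q' > 1`; raising the exponents is
what makes `ω` small on short intervals (`smallOnShortIntervals_pVarControl`). -/
theorem exists_hasYoungIntegral [CompleteSpace W] {X : ℝ → V →L[ℝ] W} {Y : ℝ → V} {a b p q : ℝ}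
    (hab : a ≤ b) (hp : 0 < p) (hq : 0 < q) (hpq : 1 < 1 / p + 1 / q)
    (hXc : ContinuousOn X (Icc a b)) (hYc : ContinuousOn Y (Icc a b)) (hX : pVar q a b X < ⊤)
    (hY : pVar p a b Y < ⊤) : ∃ I, HasYoungIntegral a b X Y I := by
  obtain ⟨l, hl, hl1⟩ := exists_between ((div_lt_one (by positivity)).mpr hpq)
  have hl0 : 0 < l := lt_of_le_of_lt (by positivity) hl
  have hθ : 1 < 1 / (q / l) + 1 / (p / l) := by
    rw [div_lt_iff₀ (by positivity)] at hl
    calc 1 < l * (1 / p + 1 / q) := hl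
      _ = 1 / (q / l) + 1 / (p / l) := by field_simp; ring
  have hpp : p < p / l := (lt_div_iff₀ hl0).mpr (mul_lt_of_lt_one_right hp hl1)
  have hqq : q < q / l := (lt_div_iff₀ hl0).mpr (mul_lt_of_lt_one_right hq hl1)
  rw [pVar_lt_top_iff hq] at hX
  rw [pVar_lt_top_iff hp] at hY
  have hX' := pVarControl_lt_top hXc hq.le hqq.le hX
  have hY' := pVarControl_lt_top hYc hp.le hpp.le hY
  refine exists_hasYoungIntegral_of_control
    ((isControlOn_pVarControl hX'.ne).add (isControlOn_pVarControl hY'.ne))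
    (by positivity) (by positivity) (fun s t hs hst ht => ?_) (fun s t hs hst ht => ?_)
    ((smallOnShortIntervals_pVarControl hXc hq.le hqq hX).add
      (smallOnShortIntervals_pVarControl hYc hp.le hpp hY)) hab hθ
  · refine (norm_sub_le_pVarControl (by positivity) (pVarControl_ne_top hX'.ne hs hst ht) hst).trans
      (Real.rpow_le_rpow ENNReal.toReal_nonneg (le_add_of_nonneg_right ENNReal.toReal_nonneg)
        (by positivity))
  · refine (norm_sub_le_pVarControl (by positivity) (pVarControl_ne_top hY'.ne hs hst ht) hst).trans
      (Real.rpow_le_rpow ENNReal.toReal_nonneg (le_add_of_nonneg_left ENNReal.toReal_nonneg)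
        (by positivity))

end Young

section TimeChange

variable {V : Type*} [NormedAddCommGroup V] {x : ℝ → V} {H : ℝ → ℝ} {a b C κ : ℝ}

theorem pVar_one_div_lt_top_of_norm_sub_le (hH : MonotoneOn H (Icc a b)) (hC : 0 ≤ C)
    (hκ : 0 < κ) (hx : ∀ s t, a ≤ s → s ≤ t → t ≤ b → ‖x t - x s‖ ≤ C * (H t - H s) ^ κ) :
    pVar (1 / κ) a b x < ⊤ := by
  rw [pVar_lt_top_iff (by positivity)]
  refine lt_of_le_of_lt (partitionSup_le fun n c hc h0 hn => ?_)
    (ENNReal.ofReal_lt_top (r := C ^ (1 / κ) * (H b - H a)))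
  rw [partitionSum, ← ENNReal.ofReal_sum_of_nonneg fun _ _ => by positivity]
  refine ENNReal.ofReal_le_ofReal ?_
  calc ∑ i ∈ Finset.range n, ‖x (c (i + 1)) - x (c i)‖ ^ (1 / κ)
      ≤ ∑ i ∈ Finset.range n, C ^ (1 / κ) * (H (c (i + 1)) - H (c i)) := by
        refine Finset.sum_le_sum fun i hi => ?_
        rw [Finset.mem_range] at hi
        have hci : c i ∈ Icc a b := ⟨h0 ▸ hc i.zero_le, hn ▸ hc hi.le⟩
        have hci' : c (i + 1) ∈ Icc a b := ⟨h0 ▸ hc (i + 1).zero_le, hn ▸ hc hi⟩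
        have hΔ : 0 ≤ H (c (i + 1)) - H (c i) := sub_nonneg.mpr (hH hci hci' (hc i.le_succ))
        calc ‖x (c (i + 1)) - x (c i)‖ ^ (1 / κ)
            ≤ (C * (H (c (i + 1)) - H (c i)) ^ κ) ^ (1 / κ) :=
              Real.rpow_le_rpow (norm_nonneg _) (hx _ _ hci.1 (hc i.le_succ) hci'.2) (by positivity)
          _ = C ^ (1 / κ) * (H (c (i + 1)) - H (c i)) := by
              rw [Real.mul_rpow hC (by positivity), one_div, Real.rpow_rpow_inv hΔ hκ.ne']
    _ = C ^ (1 / κ) * (H b - H a) := by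
        rw [← Finset.mul_sum, Finset.sum_range_sub (fun i => H (c i)), hn, h0]

theorem continuousOn_of_norm_sub_le (hHc : ContinuousOn H (Icc a b)) (hH : MonotoneOn H (Icc a b))
    (hκ : 0 < κ) (hx : ∀ s t, a ≤ s → s ≤ t → t ≤ b → ‖x t - x s‖ ≤ C * (H t - H s) ^ κ) :
    ContinuousOn x (Icc a b) := by
  intro t₀ ht₀
  rw [ContinuousWithinAt, tendsto_iff_norm_sub_tendsto_zero]
  have hlim : Tendsto (fun t => C * |H t - H t₀| ^ κ) (𝓝[Icc a b] t₀) (𝓝 0) := by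
    simpa [Real.zero_rpow hκ.ne'] using
      ((((hHc t₀ ht₀).sub (continuousWithinAt_const (b := H t₀))).abs.rpow_const
        (Or.inr hκ.le)).const_mul C).tendsto
  refine squeeze_zero' (Eventually.of_forall fun _ => norm_nonneg _)
    (eventually_nhdsWithin_of_forall fun t ht => ?_) hlim
  rcases le_total t₀ t with h | h
  · rw [abs_of_nonneg (sub_nonneg.mpr (hH ht₀ ht h))]
    exact hx _ _ ht₀.1 h ht.2
  · rw [norm_sub_rev, abs_sub_comm, abs_of_nonneg (sub_nonneg.mpr (hH ht ht₀ h))]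
    exact hx _ _ ht.1 h ht₀.2

end TimeChange

noncomputable def clock {E : Type*} [NormedAddCommGroup E] (F : ℝ → E) (t : ℝ) : ℝ :=
  t + ∫ r in (0 : ℝ)..t, ‖F r‖

theorem continuousOn_clock {E : Type*} [NormedAddCommGroup E] {F : ℝ → E} {T : ℝ}
    (hF : IntegrableOn F (Icc 0 T)) (hT : 0 ≤ T) : ContinuousOn (clock F) (Icc 0 T) := by
  have h := intervalIntegral.continuousOn_primitive_interval (μ := volume) (a := 0) (b := T)
    (f := fun r => ‖F r‖) (by rw [uIcc_of_le hT]; exact hF.norm)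
  rw [uIcc_of_le hT] at h
  exact continuousOn_id.add h

section StateEquation

variable {E : Type*} [NormedAddCommGroup E] [NormedSpace ℝ E] {T : ℝ} {f : ℝ → E → E}
  {g : ℝ → E → (E →L[ℝ] E)} {ξ : E} {x u : ℝ → E}

theorem IsProcessOn.abs_sub_add_norm_sub_le (hx : IsProcessOn T f g ξ x u) {s t : ℝ} (hs : 0 ≤ s)
    (hst : s ≤ t) (ht : t ≤ T) :
    |t - s| + ‖x t - x s‖ ≤ clock (fun r => f r (x r) + g r (x r) (u r)) t -
      clock (fun r => f r (x r) + g r (x r) (u r)) s := by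
  obtain ⟨-, hF, hxF⟩ := hx
  have hII : ∀ v, 0 ≤ v → v ≤ T →
      IntervalIntegrable (fun r => f r (x r) + g r (x r) (u r)) volume 0 v := fun v hv hvT =>
    (hF.mono_set (by rw [uIcc_of_le hv]; exact Icc_subset_Icc le_rfl hvT)).intervalIntegrable
  have hxst : x t - x s = ∫ r in s..t, (f r (x r) + g r (x r) (u r)) := by
    rw [hxF t ⟨hs.trans hst, ht⟩, hxF s ⟨hs, hst.trans ht⟩, add_sub_add_left_eq_sub,
      intervalIntegral.integral_interval_sub_left (hII t (hs.trans hst) ht)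
        (hII s hs (hst.trans ht))]
  have hclock : clock (fun r => f r (x r) + g r (x r) (u r)) t -
      clock (fun r => f r (x r) + g r (x r) (u r)) s =
        (t - s) + ∫ r in s..t, ‖f r (x r) + g r (x r) (u r)‖ := by
    rw [clock, clock, ← intervalIntegral.integral_interval_sub_left
      (hII t (hs.trans hst) ht).norm (hII s hs (hst.trans ht)).norm]
    ring
  rw [hclock, abs_of_nonneg (sub_nonneg.mpr hst), hxst]
  gcongr
  exact intervalIntegral.norm_integral_le_integral_norm hst

theorem IsProcessOn.norm_le (hx : IsProcessOn T f g ξ x u) {t : ℝ} (ht : t ∈ Icc 0 T) :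
    ‖x t‖ ≤ ‖ξ‖ + (clock (fun r => f r (x r) + g r (x r) (u r)) T -
      clock (fun r => f r (x r) + g r (x r) (u r)) 0) := by
  have hx0 : x 0 = ξ := by simpa using hx.2.2 0 ⟨le_rfl, ht.1.trans ht.2⟩
  have h₁ := hx.abs_sub_add_norm_sub_le le_rfl ht.1 ht.2
  have h₂ := hx.abs_sub_add_norm_sub_le ht.1 ht.2 le_rfl
  calc ‖x t‖ ≤ ‖x 0‖ + ‖x t - x 0‖ := norm_le_norm_add_norm_sub' _ _
    _ ≤ _ := by
      rw [hx0] at h₁ ⊢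
      linarith [abs_nonneg (t - 0), abs_nonneg (T - t), norm_nonneg (x T - x t)]

theorem IsProcessOn.monotoneOn_clock (hx : IsProcessOn T f g ξ x u) :
    MonotoneOn (clock fun r => f r (x r) + g r (x r) (u r)) (Icc 0 T) := fun s hs t ht hst => by
  linarith [hx.abs_sub_add_norm_sub_le hs.1 hst ht.2, abs_nonneg (t - s), norm_nonneg (x t - x s)]

theorem HypothesisI.norm_sub_le_clock {d : ℕ} {U : Set E} {φ : ℝ → E → E → ℝ}
    {ψ : ℝ → E → (EuclideanSpace ℝ (Fin d) →L[ℝ] ℝ)} {r κ Cψ α Cφ δ Cs Ce β γ : ℝ} {K : ℝ → ℝ}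
    (hyp : HypothesisI d T f g U φ ψ ξ r κ Cψ α Cφ δ Cs Ce β γ K)
    (hx : IsProcessOn T f g ξ x u) :
    ∃ C ≥ 0, ∀ s t, 0 ≤ s → s ≤ t → t ≤ T → ‖ψ t (x t) - ψ s (x s)‖ ≤
      C * (clock (fun r => f r (x r) + g r (x r) (u r)) t -
        clock (fun r => f r (x r) + g r (x r) (u r)) s) ^ κ := by
  set R := ‖ξ‖ + (clock (fun r => f r (x r) + g r (x r) (u r)) T -
    clock (fun r => f r (x r) + g r (x r) (u r)) 0)
  refine ⟨max (K R) 0, le_max_right _ _, fun s t hs hst ht => ?_⟩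
  have hxs := hx.norm_le ⟨hs, hst.trans ht⟩
  have hxt := hx.norm_le ⟨hs.trans hst, ht⟩
  refine (hyp.ψ_holder R ((norm_nonneg _).trans hxs) s ⟨hs, hst.trans ht⟩ t ⟨hs.trans hst, ht⟩
    (x s) (x t) hxs hxt).trans (mul_le_mul (le_max_left _ _) ?_ (by positivity) (le_max_right _ _))
  exact Real.rpow_le_rpow (by positivity) (hx.abs_sub_add_norm_sub_le hs hst ht)
    (by linarith [hyp.hκ])

end StateEquation

theorem statement_4_general (d : ℕ) {E : Type*} [NormedAddCommGroup E] [NormedSpace ℝ E]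
    (T : ℝ) (f : ℝ → E → E) (g : ℝ → E → (E →L[ℝ] E)) (U : Set E)
    (φ : ℝ → E → E → ℝ) (ψ : ℝ → E → (EuclideanSpace ℝ (Fin d) →L[ℝ] ℝ))
    (ξ : E) (r κ Cψ α Cφ δ Cs Ce β γ : ℝ) (K : ℝ → ℝ)
    (hyp : HypothesisI d T f g U φ ψ ξ r κ Cψ α Cφ δ Cs Ce β γ K)
    (η : ℝ → EuclideanSpace ℝ (Fin d)) (hη : ContinuousOn η (Set.Icc 0 T))
    (hηv : ∀ p > (2 : ℝ), pVar p 0 T η < ⊤) :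
    ∀ x u : ℝ → E, IsFeasible T f g U ξ x u →
      pVar (1 / κ) 0 T (fun t => ψ t (x t)) < ⊤ ∧
      ∃ I : ℝ, HasYoungIntegral 0 T (fun t => ψ t (x t)) η I := by
  rintro x u ⟨hx, -⟩
  have hκ : 0 < κ := by linarith [hyp.hκ]
  obtain ⟨C, hC, hψx⟩ := hyp.norm_sub_le_clock hx
  have hψxv := pVar_one_div_lt_top_of_norm_sub_le hx.monotoneOn_clock hC hκ hψx
  obtain ⟨e, he, he2⟩ : ∃ e, max (1 - κ) 0 < e ∧ e < 1 / 2 :=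
    exists_between (max_lt (by linarith [hyp.hκ]) one_half_pos)
  have he0 : 0 < e := (le_max_right _ _).trans_lt he
  refine ⟨hψxv, exists_hasYoungIntegral hyp.hT.le (p := 1 / e) (by positivity) (by positivity) ?_
    (continuousOn_of_norm_sub_le (continuousOn_clock hx.2.1 hyp.hT.le) hx.monotoneOn_clock hκ
      hψx) hη hψxv (hηv _ ?_)⟩
  · rw [one_div_one_div, one_div_one_div]
    linarith [le_max_left (1 - κ) 0]
  · rw [gt_iff_lt, lt_one_div (by norm_num) he0]
    linarith

/-- Lemma 1.2(b): under Hypothesis I, for every feasible process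
`(x,u)` the function `t ↦ ψ(t, x(t))` has finite `(1/κ)`-variation (`1/κ < 2`), and
the Young integral `∫ ψ(t,x(t)) dη(t)` exists (and is finite). -/
theorem statement_4 (d : ℕ) {E : Type*} [NormedAddCommGroup E] [NormedSpace ℝ E]
    [FiniteDimensional ℝ E]
    (T : ℝ) (f : ℝ → E → E) (g : ℝ → E → (E →L[ℝ] E)) (U : Set E)
    (φ : ℝ → E → E → ℝ) (ψ : ℝ → E → (EuclideanSpace ℝ (Fin d) →L[ℝ] ℝ))
    (ξ : E) (r κ Cψ α Cφ δ Cs Ce β γ : ℝ) (K : ℝ → ℝ)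
    (hyp : HypothesisI d T f g U φ ψ ξ r κ Cψ α Cφ δ Cs Ce β γ K)
    (η : ℝ → EuclideanSpace ℝ (Fin d)) (hη : ContinuousOn η (Set.Icc 0 T))
    (hηv : ∀ p > (2 : ℝ), pVar p 0 T η < ⊤) :
    ∀ x u : ℝ → E, IsFeasible T f g U ξ x u →
      pVar (1 / κ) 0 T (fun t => ψ t (x t)) < ⊤ ∧
      ∃ I : ℝ, HasYoungIntegral 0 T (fun t => ψ t (x t)) η I :=
  statement_4_general d T f g U φ ψ ξ r κ Cψ α Cφ δ Cs Ce β γ K hyp η hη hηv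
end

section
/- Let T > 0, E a finite-dimensional normed real vector space with dual E', M : [0,T] → L(E,E) measurable with t ↦ |M(t)| (operator norm) integrable, and F : [0,T] → E' continuous with Var_q(F) < ∞ for some q ≥ 1. Then the integral equation λ(t) = ∫_t^T λ(s) M(s) ds + F(t), t ∈ [0,T], has a unique continuous solution λ : [0,T] → E', and λ has finite q-variation: Var_q(λ) < ∞. -/
open Set MeasureTheory Filter
open scoped ENNReal NNReal Topology

noncomputable section
attribute [local instance] Classical.propDecidable

end

/-!
The solution is the unique fixed point of the Picard map `Φ x (t) = ∫_t^T x(s) M(s) ds + F(t)`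
on `C([0,T], E')`. Writing `h(t) = ∫_t^T ‖M‖`, induction gives
`‖Φⁿ x (t) - Φⁿ y (t)‖ ≤ ‖x - y‖ h(t)ⁿ / n!`, the step being the identity
`∫_t^T ‖M(s)‖ h(s)ⁿ ds = h(t)ⁿ⁺¹ / (n + 1)` (the fundamental theorem of calculus for the
absolutely continuous function `h ^ (n + 1)`); hence some iterate of `Φ` is a contraction.
The solution is the integral term, which has bounded variation, plus `F`, so its `q`-variation
is finite.
-/

open Function
open scoped Interval Nat

theorem AbsolutelyContinuousOnInterval.fun_pow {f : ℝ → ℝ} {a b : ℝ}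
    (hf : AbsolutelyContinuousOnInterval f a b) (n : ℕ) :
    AbsolutelyContinuousOnInterval (fun x => f x ^ n) a b := by
  induction n with
  | zero => simpa using (contDiffOn_const (c := (1 : ℝ))).absolutelyContinuousOnInterval
  | succ n ih => simpa only [pow_succ] using ih.fun_mul hf

theorem intervalIntegral.integral_mul_integral_pow {ρ : ℝ → ℝ} {a b : ℝ}
    (hρ : IntervalIntegrable ρ volume a b) (n : ℕ) :
    ∫ s in a..b, ρ s * (∫ u in s..b, ρ u) ^ n = (∫ u in a..b, ρ u) ^ (n + 1) / (n + 1) := by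
  set h : ℝ → ℝ := fun s => ∫ u in s..b, ρ u
  have hb : b ∈ [[a, b]] := right_mem_uIcc
  have h_eq : h = fun s => -∫ u in b..s, ρ u := funext fun s => integral_symm _ _
  have hAC : AbsolutelyContinuousOnInterval h a b :=
    h_eq ▸ (hρ.absolutelyContinuousOnInterval_intervalIntegral hb).neg
  have hderiv : ∀ᵐ s, s ∈ Ι a b →
      deriv (fun s => h s ^ (n + 1)) s = -((n + 1) * (ρ s * h s ^ n)) := by
    filter_upwards [hρ.ae_hasDerivAt_integral] with s hs hsI
    have hh : HasDerivAt h (-ρ s) s := h_eq ▸ (hs (uIoc_subset_uIcc hsI) b hb).neg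
    rw [(hh.fun_pow (n + 1)).deriv]
    push_cast
    ring
  have hFTC := (hAC.fun_pow (n + 1)).integral_deriv_eq_sub
  rw [integral_congr_ae hderiv, integral_neg, integral_const_mul] at hFTC
  simp only [h, integral_same] at hFTC
  field_simp
  linear_combination -hFTC

theorem MeasureTheory.IntegrableOn.intervalIntegrable_of_mem_Icc {E : Type*}
    [NormedAddCommGroup E] {f : ℝ → E} {a b u v : ℝ} (hf : IntegrableOn f (Icc a b))
    (hu : u ∈ Icc a b) (hv : v ∈ Icc a b) : IntervalIntegrable f volume u v :=
  (hf.mono_set (uIcc_subset_Icc hu hv)).intervalIntegrable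

theorem Fin.sum_univ_succ_sub_castSucc {G : Type*} [AddCommGroup G] :
    ∀ {n : ℕ} (f : Fin (n + 1) → G),
      ∑ i : Fin n, (f i.succ - f i.castSucc) = f (Fin.last n) - f 0
  | 0, f => by simp
  | n + 1, f => by
    rw [Fin.sum_univ_castSucc]
    simp only [Fin.succ_castSucc]
    rw [Fin.sum_univ_succ_sub_castSucc fun i => f i.castSucc]
    simp only [Fin.castSucc_zero, Fin.succ_last]
    abel

theorem ENNReal.sum_rpow_le_rpow_sum {ι : Type*} (s : Finset ι) (f : ι → ℝ≥0∞) {p : ℝ}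
    (hp : 1 ≤ p) : ∑ i ∈ s, f i ^ p ≤ (∑ i ∈ s, f i) ^ p := by
  classical
  induction s using Finset.induction_on with
  | empty => simp [ENNReal.zero_rpow_of_pos (by linarith : 0 < p)]
  | insert i s hi ih =>
    rw [Finset.sum_insert hi, Finset.sum_insert hi]
    calc f i ^ p + ∑ j ∈ s, f j ^ p ≤ f i ^ p + (∑ j ∈ s, f j) ^ p := by gcongr
      _ ≤ (f i + ∑ j ∈ s, f j) ^ p := ENNReal.add_rpow_le_rpow_add _ _ hp

section PVariation

variable {V : Type*} [NormedAddCommGroup V] {p a b : ℝ} {x y : ℝ → V}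

theorem mem_Icc_of_monotone {n : ℕ} {t : Fin (n + 1) → ℝ} (ht : Monotone t) (h0 : t 0 = a)
    (hn : t (Fin.last n) = b) (i : Fin (n + 1)) : t i ∈ Icc a b :=
  ⟨h0 ▸ ht (Fin.zero_le i), hn ▸ ht (Fin.le_last i)⟩

theorem pVar_lt_top_iff_s9 (hp : 0 < p) :
    pVar p a b x < ⊤ ↔ ∃ C : ℝ≥0∞, C ≠ ⊤ ∧ ∀ (n : ℕ) (t : Fin (n + 1) → ℝ),
      Monotone t → t 0 = a → t (Fin.last n) = b →
        ∑ i : Fin n, (‖x (t i.succ) - x (t i.castSucc)‖₊ : ℝ≥0∞) ^ p ≤ C := by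
  rw [pVar, ENNReal.rpow_lt_top_iff_of_pos (by positivity)]
  constructor
  · exact fun h => ⟨_, h.ne, fun n t ht h0 hn =>
      le_iSup₂_of_le (f := fun n t => ⨆ (_ : Monotone t ∧ t 0 = a ∧ t (Fin.last n) = b), _)
        n t (le_iSup_of_le ⟨ht, h0, hn⟩ le_rfl)⟩
  · rintro ⟨C, hC, h⟩
    exact lt_of_le_of_lt (iSup₂_le fun n t => iSup_le fun ⟨ht, h0, hn⟩ => h n t ht h0 hn)
      hC.lt_top

theorem pVar_congr (h : EqOn x y (Icc a b)) : pVar p a b x = pVar p a b y := by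
  simp only [pVar]
  congr 1
  refine iSup_congr fun n => iSup_congr fun t => iSup_congr fun ⟨ht, h0, hn⟩ => ?_
  simp only [h (mem_Icc_of_monotone ht h0 hn _)]

theorem pVar_add_lt_top (hp : 1 ≤ p) (hx : pVar p a b x < ⊤) (hy : pVar p a b y < ⊤) :
    pVar p a b (x + y) < ⊤ := by
  have hp0 : 0 < p := by linarith
  obtain ⟨C, hC, hxC⟩ := (pVar_lt_top_iff_s9 hp0).1 hx
  obtain ⟨D, hD, hyD⟩ := (pVar_lt_top_iff_s9 hp0).1 hy
  refine (pVar_lt_top_iff_s9 hp0).2 ⟨2 ^ (p - 1) * (C + D), by finiteness, fun n t ht h0 hn => ?_⟩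
  calc ∑ i : Fin n, (‖(x + y) (t i.succ) - (x + y) (t i.castSucc)‖₊ : ℝ≥0∞) ^ p
      ≤ ∑ i : Fin n, 2 ^ (p - 1) * ((‖x (t i.succ) - x (t i.castSucc)‖₊ : ℝ≥0∞) ^ p
          + (‖y (t i.succ) - y (t i.castSucc)‖₊ : ℝ≥0∞) ^ p) := by
        gcongr with i
        refine (ENNReal.rpow_le_rpow ?_ hp0.le).trans
          (ENNReal.rpow_add_le_mul_rpow_add_rpow _ _ hp)
        rw [Pi.add_apply, Pi.add_apply, add_sub_add_comm, ← ENNReal.coe_add, ENNReal.coe_le_coe]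
        exact nnnorm_add_le _ _
    _ ≤ 2 ^ (p - 1) * (C + D) := by
        rw [← Finset.mul_sum, Finset.sum_add_distrib]
        gcongr
        exacts [hxC n t ht h0 hn, hyD n t ht h0 hn]

theorem pVar_lt_top_of_norm_sub_le (hp : 1 ≤ p) {w : ℝ → ℝ}
    (hw : ∀ s t, a ≤ s → s ≤ t → t ≤ b → ‖x t - x s‖ ≤ w t - w s) : pVar p a b x < ⊤ := by
  refine (pVar_lt_top_iff_s9 (by linarith)).2
    ⟨ENNReal.ofReal (w b - w a) ^ p, by finiteness, fun n t ht h0 hn => ?_⟩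
  have hmem := mem_Icc_of_monotone ht h0 hn
  have hstep (i : Fin n) :
      ‖x (t i.succ) - x (t i.castSucc)‖ ≤ w (t i.succ) - w (t i.castSucc) :=
    hw _ _ (hmem _).1 (ht Fin.castSucc_lt_succ.le) (hmem _).2
  calc ∑ i : Fin n, (‖x (t i.succ) - x (t i.castSucc)‖₊ : ℝ≥0∞) ^ p
      ≤ (∑ i : Fin n, (‖x (t i.succ) - x (t i.castSucc)‖₊ : ℝ≥0∞)) ^ p :=
        ENNReal.sum_rpow_le_rpow_sum _ _ hp
    _ ≤ ENNReal.ofReal (w b - w a) ^ p := by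
        gcongr
        have htel := Fin.sum_univ_succ_sub_castSucc fun i => w (t i)
        rw [← h0, ← hn, ← htel,
          ENNReal.ofReal_sum_of_nonneg fun i _ => (norm_nonneg _).trans (hstep i)]
        gcongr with i
        rw [← ENNReal.ofReal_coe_nnreal, coe_nnnorm]
        exact ENNReal.ofReal_le_ofReal (hstep i)

theorem pVar_intervalIntegral_lt_top [NormedSpace ℝ V] {g : ℝ → V} (hp : 1 ≤ p)
    (hg : IntegrableOn g (Icc a b)) : pVar p a b (fun t => ∫ s in t..b, g s) < ⊤ := by
  refine pVar_lt_top_of_norm_sub_le hp (w := fun t => ∫ s in a..t, ‖g s‖)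
    fun s t has hst htb => ?_
  have hs : s ∈ Icc a b := ⟨has, hst.trans htb⟩
  have ht : t ∈ Icc a b := ⟨has.trans hst, htb⟩
  have ha : a ∈ Icc a b := ⟨le_rfl, has.trans (hst.trans htb)⟩
  have hb : b ∈ Icc a b := ⟨has.trans (hst.trans htb), le_rfl⟩
  have h₁ : (∫ u in t..b, g u) - ∫ u in s..b, g u = -∫ u in s..t, g u := by
    rw [← intervalIntegral.integral_add_adjacent_intervals (hg.intervalIntegrable_of_mem_Icc hs ht)
      (hg.intervalIntegrable_of_mem_Icc ht hb)]
    abel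
  have h₂ : (∫ u in a..t, ‖g u‖) - ∫ u in a..s, ‖g u‖ = ∫ u in s..t, ‖g u‖ :=
    intervalIntegral.integral_interval_sub_left (hg.intervalIntegrable_of_mem_Icc ha ht).norm
      (hg.intervalIntegrable_of_mem_Icc ha hs).norm
  rw [h₁, h₂, norm_neg]
  exact intervalIntegral.norm_integral_le_integral_norm hst

end PVariation

section BackwardVolterra

variable {G : Type*} [NormedAddCommGroup G] [NormedSpace ℝ G] {a b : ℝ} {A : ℝ → G →L[ℝ] G}

theorem integrableOn_apply_of_continuousOn
    (hA : AEStronglyMeasurable A (volume.restrict (Icc a b)))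
    (hAi : IntegrableOn (fun s => ‖A s‖) (Icc a b)) {x : ℝ → G} (hx : ContinuousOn x (Icc a b)) :
    IntegrableOn (fun s => A s (x s)) (Icc a b) := by
  obtain ⟨C, hC⟩ := isCompact_Icc.exists_bound_of_continuousOn hx
  have hmeas : AEStronglyMeasurable (fun s => A s (x s)) (volume.restrict (Icc a b)) :=
    isBoundedBilinearMap_apply.continuous.comp_aestronglyMeasurable
      (hA.prodMk (hx.aestronglyMeasurable measurableSet_Icc))
  refine (hAi.mul_const C).mono' hmeas ?_
  filter_upwards [ae_restrict_mem measurableSet_Icc] with s hs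
  exact (A s).le_opNorm_of_le (hC s hs)

theorem integrableOn_apply_IccExtend (hab : a ≤ b)
    (hA : AEStronglyMeasurable A (volume.restrict (Icc a b)))
    (hAi : IntegrableOn (fun s => ‖A s‖) (Icc a b)) (x : C(Icc a b, G)) :
    IntegrableOn (fun s => A s (IccExtend hab x s)) (Icc a b) :=
  integrableOn_apply_of_continuousOn hA hAi (continuous_IccExtend_iff.2 x.continuous).continuousOn

noncomputable def backwardPicard (hab : a ≤ b)
    (hA : AEStronglyMeasurable A (volume.restrict (Icc a b)))
    (hAi : IntegrableOn (fun s => ‖A s‖) (Icc a b)) (f : C(Icc a b, G)) (x : C(Icc a b, G)) :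
    C(Icc a b, G) where
  toFun t := (∫ s in t..b, A s (IccExtend hab x s)) + f t
  continuous_toFun := by
    have hint := integrableOn_apply_IccExtend hab hA hAi x
    refine ContinuousOn.comp_continuous
      (intervalIntegral.continuousOn_primitive_interval_left (by rw [uIcc_of_le hab]; exact hint))
      continuous_subtype_val (fun t => ?_) |>.add f.continuous
    rw [uIcc_of_le hab]
    exact t.2

variable (hab : a ≤ b) (hA : AEStronglyMeasurable A (volume.restrict (Icc a b)))
  (hAi : IntegrableOn (fun s => ‖A s‖) (Icc a b)) (f : C(Icc a b, G))

theorem backwardPicard_apply (x : C(Icc a b, G)) (t : Icc a b) :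
    backwardPicard hab hA hAi f x t = (∫ s in t..b, A s (IccExtend hab x s)) + f t :=
  rfl

theorem dist_iterate_backwardPicard_apply_le (n : ℕ) (x y : C(Icc a b, G)) (t : Icc a b) :
    dist ((backwardPicard hab hA hAi f)^[n] x t) ((backwardPicard hab hA hAi f)^[n] y t)
      ≤ dist x y * (∫ s in t..b, ‖A s‖) ^ n / n ! := by
  induction n generalizing t with
  | zero => simpa using ContinuousMap.dist_apply_le_dist (f := x) (g := y) t
  | succ n ih =>
    set u := (backwardPicard hab hA hAi f)^[n] x
    set v := (backwardPicard hab hA hAi f)^[n] y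
    have htb : (t : ℝ) ≤ b := t.2.2
    have hb : b ∈ Icc a b := right_mem_Icc.2 hab
    have hint {w : C(Icc a b, G)} :
        IntervalIntegrable (fun s => A s (IccExtend hab w s)) volume t b :=
      (integrableOn_apply_IccExtend hab hA hAi w).intervalIntegrable_of_mem_Icc t.2 hb
    have hρ : IntervalIntegrable (fun s => ‖A s‖) volume t b :=
      hAi.intervalIntegrable_of_mem_Icc t.2 hb
    have hcont : ContinuousOn (fun s => ∫ r in s..b, ‖A r‖) [[(t : ℝ), b]] :=
      intervalIntegral.continuousOn_primitive_interval_left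
        (hAi.mono_set (uIcc_subset_Icc t.2 hb))
    have hdiff : backwardPicard hab hA hAi f u t - backwardPicard hab hA hAi f v t
        = ∫ s in t..b, A s (IccExtend hab u s - IccExtend hab v s) := by
      simp only [backwardPicard_apply, map_sub]
      rw [intervalIntegral.integral_sub hint hint]
      abel
    have hbound : ∀ᵐ s, s ∈ Ioc (t : ℝ) b → ‖A s (IccExtend hab u s - IccExtend hab v s)‖
        ≤ dist x y / n ! * (‖A s‖ * (∫ r in s..b, ‖A r‖) ^ n) := by
      refine ae_of_all _ fun s hs => ?_
      have hsI : s ∈ Icc a b := ⟨t.2.1.trans hs.1.le, hs.2⟩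
      refine ((A s).le_opNorm _).trans ?_
      rw [IccExtend_of_mem _ _ hsI, IccExtend_of_mem _ _ hsI, ← dist_eq_norm]
      calc ‖A s‖ * dist (u ⟨s, hsI⟩) (v ⟨s, hsI⟩)
          ≤ ‖A s‖ * (dist x y * (∫ r in s..b, ‖A r‖) ^ n / n !) := by gcongr; exact ih _
        _ = dist x y / n ! * (‖A s‖ * (∫ r in s..b, ‖A r‖) ^ n) := by ring
    rw [iterate_succ_apply', iterate_succ_apply', dist_eq_norm, hdiff]
    calc _ ≤ ∫ s in t..b, dist x y / n ! * (‖A s‖ * (∫ r in s..b, ‖A r‖) ^ n) :=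
          intervalIntegral.norm_integral_le_of_norm_le htb hbound
            ((hρ.mul_continuousOn (hcont.pow n)).const_mul _)
      _ = dist x y * (∫ s in t..b, ‖A s‖) ^ (n + 1) / (n + 1)! := by
          rw [intervalIntegral.integral_const_mul, intervalIntegral.integral_mul_integral_pow hρ,
            Nat.factorial_succ]
          push_cast
          field_simp

theorem exists_contractingWith_iterate_backwardPicard :
    ∃ (n : ℕ) (K : ℝ≥0), ContractingWith K (backwardPicard hab hA hAi f)^[n] := by
  set L := ∫ s in a..b, ‖A s‖
  have hL : 0 ≤ L := intervalIntegral.integral_nonneg hab fun _ _ => norm_nonneg _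
  obtain ⟨n, hn⟩ : ∃ n : ℕ, L ^ n / n ! < 1 :=
    ((FloorSemiring.tendsto_pow_div_factorial_atTop L).eventually (gt_mem_nhds one_pos)).exists
  have hK : 0 ≤ L ^ n / n ! := by positivity
  refine ⟨n, ⟨L ^ n / n !, hK⟩, hn, LipschitzWith.of_dist_le_mul fun x y => ?_⟩
  refine (ContinuousMap.dist_le (mul_nonneg hK dist_nonneg)).2 fun t => ?_
  have hLt : ∫ s in t..b, ‖A s‖ ≤ L :=
    intervalIntegral.integral_mono_interval t.2.1 t.2.2 le_rfl
      (ae_of_all _ fun _ => norm_nonneg _)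
      (hAi.intervalIntegrable_of_mem_Icc (left_mem_Icc.2 hab) (right_mem_Icc.2 hab))
  have hLt₀ : 0 ≤ ∫ s in t..b, ‖A s‖ :=
    intervalIntegral.integral_nonneg t.2.2 fun _ _ => norm_nonneg _
  calc _ ≤ dist x y * (∫ s in t..b, ‖A s‖) ^ n / n ! :=
        dist_iterate_backwardPicard_apply_le hab hA hAi f n x y t
    _ ≤ dist x y * L ^ n / n ! := by gcongr
    _ = L ^ n / n ! * dist x y := by ring

theorem existsUnique_isFixedPt_backwardPicard [CompleteSpace G] :
    ∃! x, IsFixedPt (backwardPicard hab hA hAi f) x := by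
  obtain ⟨n, K, hK⟩ := exists_contractingWith_iterate_backwardPicard hab hA hAi f
  have : Nonempty C(Icc a b, G) := ⟨0⟩
  exact ⟨_, ContractingWith.isFixedPt_fixedPoint_iterate hK,
    fun x hx => ContractingWith.fixedPoint_unique hK (hx.iterate n)⟩

end BackwardVolterra

section BackwardVolterraEquation

variable {G : Type*} [NormedAddCommGroup G] [NormedSpace ℝ G] {a b : ℝ} {A : ℝ → G →L[ℝ] G}

theorem isFixedPt_backwardPicard_iff (hab : a ≤ b)
    (hA : AEStronglyMeasurable A (volume.restrict (Icc a b)))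
    (hAi : IntegrableOn (fun s => ‖A s‖) (Icc a b)) {f y : ℝ → G} (hf : ContinuousOn f (Icc a b))
    (hy : ContinuousOn y (Icc a b)) :
    IsFixedPt (backwardPicard hab hA hAi ⟨_, hf.domRestrict⟩) ⟨_, hy.domRestrict⟩ ↔
      ∀ t ∈ Icc a b, y t = (∫ s in t..b, A s (y s)) + f t := by
  rw [IsFixedPt, ContinuousMap.ext_iff, Subtype.forall]
  refine forall₂_congr fun t ht => ?_
  rw [backwardPicard_apply, eq_comm]
  congr! 2
  refine intervalIntegral.integral_congr fun s hs => ?_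
  rw [IccExtend_of_mem _ _ (uIcc_subset_Icc ht (right_mem_Icc.2 hab) hs)]
  rfl

theorem existsUnique_backwardVolterra [CompleteSpace G] (hab : a ≤ b)
    (hA : AEStronglyMeasurable A (volume.restrict (Icc a b)))
    (hAi : IntegrableOn (fun s => ‖A s‖) (Icc a b)) {f : ℝ → G}
    (hf : ContinuousOn f (Icc a b)) :
    ∃ x : ℝ → G, (ContinuousOn x (Icc a b) ∧
        ∀ t ∈ Icc a b, x t = (∫ s in t..b, A s (x s)) + f t) ∧
      ∀ y : ℝ → G, ContinuousOn y (Icc a b) →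
        (∀ t ∈ Icc a b, y t = (∫ s in t..b, A s (y s)) + f t) → EqOn y x (Icc a b) := by
  obtain ⟨z, hz, hz_unique⟩ := existsUnique_isFixedPt_backwardPicard hab hA hAi ⟨_, hf.domRestrict⟩
  have hzc : ContinuousOn (IccExtend hab z) (Icc a b) :=
    (continuous_IccExtend_iff.2 z.continuous).continuousOn
  have hz_eq : (⟨_, hzc.domRestrict⟩ : C(Icc a b, G)) = z := by
    ext t
    exact IccExtend_val _ _ t
  refine ⟨IccExtend hab z,
    ⟨hzc, (isFixedPt_backwardPicard_iff hab hA hAi hf hzc).1 (by rwa [hz_eq])⟩,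
    fun y hy hyeq t ht => ?_⟩
  have hyz := hz_unique _ ((isFixedPt_backwardPicard_iff hab hA hAi hf hy).2 hyeq)
  rw [IccExtend_of_mem _ _ ht, ← hyz]
  rfl

theorem pVar_lt_top_of_backwardVolterra (hA : AEStronglyMeasurable A (volume.restrict (Icc a b)))
    (hAi : IntegrableOn (fun s => ‖A s‖) (Icc a b)) {p : ℝ} (hp : 1 ≤ p) {x f : ℝ → G}
    (hx : ContinuousOn x (Icc a b)) (hxf : ∀ t ∈ Icc a b, x t = (∫ s in t..b, A s (x s)) + f t)
    (hf : pVar p a b f < ⊤) : pVar p a b x < ⊤ := by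
  rw [pVar_congr (y := (fun t => ∫ s in t..b, A s (x s)) + f) hxf]
  exact pVar_add_lt_top hp
    (pVar_intervalIntegral_lt_top hp (integrableOn_apply_of_continuousOn hA hAi hx)) hf

end BackwardVolterraEquation

theorem statement_9_general {E : Type*} [NormedAddCommGroup E] [NormedSpace ℝ E]
    (T q : ℝ) (hT : 0 < T) (hq : 1 ≤ q)
    (M : ℝ → (E →L[ℝ] E))
    (hM : AEStronglyMeasurable M (volume.restrict (Set.Icc (0 : ℝ) T)))
    (hMi : IntegrableOn (fun t => ‖M t‖) (Set.Icc (0 : ℝ) T))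
    (F : ℝ → (E →L[ℝ] ℝ)) (hF : ContinuousOn F (Set.Icc 0 T))
    (hFv : pVar q 0 T F < ⊤) :
    ∃ lam : ℝ → (E →L[ℝ] ℝ),
      (ContinuousOn lam (Set.Icc 0 T) ∧
        (∀ t ∈ Set.Icc (0 : ℝ) T, lam t = (∫ s in t..T, (lam s).comp (M s)) + F t) ∧
        pVar q 0 T lam < ⊤) ∧
      ∀ lam' : ℝ → (E →L[ℝ] ℝ), ContinuousOn lam' (Set.Icc 0 T) →
        (∀ t ∈ Set.Icc (0 : ℝ) T, lam' t = (∫ s in t..T, (lam' s).comp (M s)) + F t) →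
        Set.EqOn lam' lam (Set.Icc 0 T) := by
  -- `A s λ = λ ∘ M s`, so the costate equation is a backward Volterra equation in `E'`
  set A : ℝ → (E →L[ℝ] ℝ) →L[ℝ] (E →L[ℝ] ℝ) :=
    fun s => (ContinuousLinearMap.compL ℝ E E ℝ).flip (M s)
  have hA : AEStronglyMeasurable A (volume.restrict (Icc 0 T)) :=
    (ContinuousLinearMap.compL ℝ E E ℝ).flip.continuous.comp_aestronglyMeasurable hM
  have hAM (s : ℝ) : ‖A s‖ ≤ ‖M s‖ :=
    (A s).opNorm_le_bound (norm_nonneg _) fun l => (l.opNorm_comp_le (M s)).trans_eq (mul_comm _ _)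
  have hAi : IntegrableOn (fun s => ‖A s‖) (Icc 0 T) :=
    (hMi.mono' (f := A) hA (ae_of_all _ hAM)).norm
  obtain ⟨lam, ⟨hcont, heq⟩, hunique⟩ := existsUnique_backwardVolterra hT.le hA hAi hF
  exact ⟨lam, ⟨hcont, heq, pVar_lt_top_of_backwardVolterra hA hAi hq hcont heq hFv⟩, hunique⟩

/-- Lemma 3.2, well-posedness of the costate equation: if
`t ↦ ‖M(t)‖` is integrable and `F` is continuous with finite `q`-variation, then the
equation `λ(t) = ∫_t^T λ(s) M(s) ds + F(t)` has a unique continuous solution on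
`[0,T]`, which moreover has finite `q`-variation. -/
theorem statement_9 {E : Type*} [NormedAddCommGroup E] [NormedSpace ℝ E]
    [FiniteDimensional ℝ E]
    (T q : ℝ) (hT : 0 < T) (hq : 1 ≤ q)
    (M : ℝ → (E →L[ℝ] E))
    (hM : AEStronglyMeasurable M (volume.restrict (Set.Icc (0 : ℝ) T)))
    (hMi : IntegrableOn (fun t => ‖M t‖) (Set.Icc (0 : ℝ) T))
    (F : ℝ → (E →L[ℝ] ℝ)) (hF : ContinuousOn F (Set.Icc 0 T))
    (hFv : pVar q 0 T F < ⊤) :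
    ∃ lam : ℝ → (E →L[ℝ] ℝ),
      (ContinuousOn lam (Set.Icc 0 T) ∧
        (∀ t ∈ Set.Icc (0 : ℝ) T, lam t = (∫ s in t..T, (lam s).comp (M s)) + F t) ∧
        pVar q 0 T lam < ⊤) ∧
      ∀ lam' : ℝ → (E →L[ℝ] ℝ), ContinuousOn lam' (Set.Icc 0 T) →
        (∀ t ∈ Set.Icc (0 : ℝ) T, lam' t = (∫ s in t..T, (lam' s).comp (M s)) + F t) →
        Set.EqOn lam' lam (Set.Icc 0 T) :=
  statement_9_general T q hT hq M hM hMi F hF hFv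
end
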